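/- arXiv:1510.03480 — 9 statements merged into one kernel-verified Lean document; each statement's English description precedes it below -/
import Mathlib

section
/- Let Δ ⊆ ℕ^n be a diagram (i.e., Δ + ℕ^n ⊆ Δ) of finite type. Then for every i ≤ n, the intersection Δ ∩ (ℕ^i × {0}) is a diagram of finite type in ℕ^i. -/
/-- `Δ ⊆ ℕ^n` is a diagram if `Δ + ℕ^n ⊆ Δ`. -/
def IsDiagram {n : ℕ} (Δ : Set (Fin n → ℕ)) : Prop :=
  ∀ α ∈ Δ, ∀ β : Fin n → ℕ, α + β ∈ Δ

/-- A diagram `Δ ⊆ ℕ^n` is of finite type if for all `i < j` and every `α ∈ Δ`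
there is `a ∈ ℕ` such that the element obtained from `α` by setting the `j`-th
coordinate to `0` and adding `a` to the `i`-th coordinate is again in `Δ`. -/
def IsFiniteTypeDiagram {n : ℕ} (Δ : Set (Fin n → ℕ)) : Prop :=
  ∀ i j : Fin n, i < j → ∀ α ∈ Δ,
    ∃ a : ℕ, Function.update (Function.update α j 0) i (α i + a) ∈ Δ

/-- The inclusion `ℕ^i = ℕ^i × {0} ⊆ ℕ^n`. -/
def extendZero {i n : ℕ} (h : i ≤ n) (β : Fin i → ℕ) : Fin n → ℕ :=
  fun k => if hk : (k : ℕ) < i then β ⟨k, hk⟩ else 0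

lemma extendZero_add {i n : ℕ} (h : i ≤ n) (β γ : Fin i → ℕ) :
    extendZero h (β + γ) = extendZero h β + extendZero h γ := by
  funext k
  simp only [extendZero, Pi.add_apply]
  split <;> simp

lemma extendZero_castLE {i n : ℕ} (h : i ≤ n) (β : Fin i → ℕ) (j : Fin i) :
    extendZero h β (Fin.castLE h j) = β j := by
  simp [extendZero, Fin.castLE]

lemma extendZero_update {i n : ℕ} (h : i ≤ n) (β : Fin i → ℕ) (j : Fin i) (v : ℕ) :
    extendZero h (Function.update β j v) = Function.update (extendZero h β) (Fin.castLE h j) v := by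
  funext k
  by_cases hk : (k : ℕ) < i
  · by_cases hkj : k = Fin.castLE h j
    · subst hkj
      simp [extendZero, Function.update, Fin.ext_iff]
    · have hkj' : (⟨(k : ℕ), hk⟩ : Fin i) ≠ j := by
        intro hc
        apply hkj
        ext
        simpa using congrArg Fin.val hc
      simp only [extendZero, dif_pos hk]
      rw [Function.update_of_ne hkj', Function.update_of_ne hkj]
      simp [extendZero, hk]
  · have hkj : k ≠ Fin.castLE h j := by
      intro hc
      apply hk
      rw [hc]
      simpa using j.isLt
    simp only [extendZero, dif_neg hk]
    rw [Function.update_of_ne hkj]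
    simp [extendZero, hk]

/-- If `Δ ⊆ ℕ^n` is a diagram of finite type, then for every `i ≤ n` the
intersection `Δ ∩ (ℕ^i × {0})`, viewed as a subset of `ℕ^i`, is a diagram of
finite type. -/
theorem inter_isFiniteTypeDiagram {n : ℕ} (Δ : Set (Fin n → ℕ))
    (hΔ : IsDiagram Δ) (hft : IsFiniteTypeDiagram Δ) (i : ℕ) (h : i ≤ n) :
    IsDiagram {β : Fin i → ℕ | extendZero h β ∈ Δ} ∧
      IsFiniteTypeDiagram {β : Fin i → ℕ | extendZero h β ∈ Δ} := by
  constructor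
  · intro β hβ γ
    simp only [Set.mem_setOf_eq, extendZero_add]
    exact hΔ _ hβ _
  · intro p q hpq β hβ
    obtain ⟨a, ha⟩ := hft (Fin.castLE h p) (Fin.castLE h q) (by simpa using hpq) _ hβ
    refine ⟨a, ?_⟩
    simp only [Set.mem_setOf_eq, extendZero_update, extendZero_castLE]
    convert ha using 3
    rw [extendZero_castLE]
end

section
/- Let Δ ⊆ ℕ^n be a diagram of finite type and π: ℕ^n → ℕ^i the projection onto the first i coordinates. Then π(Δ) is a diagram of finite type in ℕ^i. -/
/-- The projection `π_{ni} : ℕ^n → ℕ^i` onto the first `i` coordinates. -/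
def projFirst {i n : ℕ} (h : i ≤ n) (α : Fin n → ℕ) : Fin i → ℕ :=
  fun k => α ⟨k, lt_of_lt_of_le k.isLt h⟩

theorem projFirst_add {i n : ℕ} (h : i ≤ n) (α β : Fin n → ℕ) :
    projFirst h (α + β) = projFirst h α + projFirst h β :=
  rfl

theorem projFirst_surjective {i n : ℕ} (h : i ≤ n) : Function.Surjective (projFirst h) :=
  fun β => ⟨Function.extend (Fin.castLE h) β 0, Function.extend_comp (Fin.castLE_injective h) β 0⟩

theorem projFirst_update {i n : ℕ} (h : i ≤ n) (α : Fin n → ℕ) (k : Fin i) (x : ℕ) :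
    projFirst h (Function.update α (Fin.castLE h k) x) = Function.update (projFirst h α) k x :=
  Function.update_comp_eq_of_injective α (Fin.castLE_injective h) k x

theorem IsDiagram.image_projFirst {n : ℕ} {Δ : Set (Fin n → ℕ)} (hΔ : IsDiagram Δ)
    {i : ℕ} (h : i ≤ n) : IsDiagram (projFirst h '' Δ) := by
  rintro _ ⟨α, hα, rfl⟩ β
  obtain ⟨β', rfl⟩ := projFirst_surjective h β
  exact ⟨α + β', hΔ α hα β', projFirst_add h α β'⟩

theorem IsFiniteTypeDiagram.image_projFirst {n : ℕ} {Δ : Set (Fin n → ℕ)}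
    (hft : IsFiniteTypeDiagram Δ) {i : ℕ} (h : i ≤ n) :
    IsFiniteTypeDiagram (projFirst h '' Δ) := by
  rintro k l hkl _ ⟨α, hα, rfl⟩
  obtain ⟨a, ha⟩ := hft (Fin.castLE h k) (Fin.castLE h l) hkl α hα
  refine ⟨a, _, ha, ?_⟩
  rw [projFirst_update, projFirst_update]
  rfl

/-- If `Δ ⊆ ℕ^n` is a diagram of finite type and `π : ℕ^n → ℕ^i` is the
projection onto the first `i` coordinates, then `π(Δ)` is a diagram of finite
type in `ℕ^i`. -/
theorem image_proj_isFiniteTypeDiagram {n : ℕ} (Δ : Set (Fin n → ℕ))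
    (hΔ : IsDiagram Δ) (hft : IsFiniteTypeDiagram Δ) (i : ℕ) (h : i ≤ n) :
    IsDiagram (projFirst h '' Δ) ∧ IsFiniteTypeDiagram (projFirst h '' Δ) :=
  ⟨hΔ.image_projFirst h, hft.image_projFirst h⟩
end

section
/- Let Δ ⊆ ℕ^n be a diagram of finite type, and for i ≤ n let π_{ni}: ℕ^n → ℕ^i be projection to the first i coordinates. Define A_i := π_{i,i-1}^{-1}(π_{n,i-1}(Δ)) \ π_{ni}(Δ), viewed inside ℕ^i. Then Γ := ℕ^n \ Δ equals the disjoint union over i = 0,…,n of A_i × ℕ^{n-i}, and each A_i is finite. -/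
/-- Truncation to the first `k` coordinates: this realizes the projection
`π_{nk} : ℕ^n → ℕ^k`, identifying `ℕ^k` with `ℕ^k × {0} ⊆ ℕ^n`. -/
def trunc {n : ℕ} (k : ℕ) (α : Fin n → ℕ) : Fin n → ℕ :=
  fun t => if (t : ℕ) < k then α t else 0

/-- `A_i := π_{i,i-1}^{-1}(π_{n,i-1}(Δ)) \ π_{ni}(Δ)`, viewed inside
`ℕ^i = ℕ^i × {0} ⊆ ℕ^n`. -/
def hironakaA {n : ℕ} (Δ : Set (Fin n → ℕ)) (i : ℕ) : Set (Fin n → ℕ) :=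
  {β | trunc i β = β ∧ (i = 0 ∨ trunc (i - 1) β ∈ trunc (i - 1) '' Δ) ∧
    β ∉ trunc i '' Δ}

/-- The subset `A_i × ℕ^{n-i}` of `ℕ^n`. -/
def hironakaPiece {n : ℕ} (Δ : Set (Fin n → ℕ)) (i : ℕ) : Set (Fin n → ℕ) :=
  {α | trunc i α ∈ hironakaA Δ i}

open Function

theorem Set.Infinite.exists_monotone_unbounded {ι : Type*} [Finite ι] {S : Set (ι → ℕ)}
    (hS : S.Infinite) :
    ∃ f : ℕ → ι → ℕ, Monotone f ∧ (∀ m, f m ∈ S) ∧ ∃ t, ∀ c, ∃ m, c ≤ f m t := by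
  obtain ⟨g, hg⟩ := (Set.isPWO_of_wellQuasiOrderedLE S).exists_monotone_subseq
    (f := fun m => hS.natEmbedding S m) fun m => (hS.natEmbedding S m).2
  set f : ℕ → ι → ℕ := fun m => hS.natEmbedding S (g m)
  have hf_inj : Injective f :=
    Subtype.coe_injective.comp ((hS.natEmbedding S).injective.comp g.injective)
  refine ⟨f, hg, fun m => (hS.natEmbedding S (g m)).2, ?_⟩
  by_contra! hbdd
  choose B hB using hbdd
  have hbox : {x : ι → ℕ | ∀ t, x t ∈ Set.Iio (B t)}.Finite :=
    Set.Finite.pi' fun t => Set.finite_Iio (B t)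
  exact Set.infinite_range_of_injective hf_inj
    (hbox.subset (Set.range_subset_iff.2 fun m t => hB t m))

section trunc

variable {n : ℕ}

theorem trunc_apply_of_lt {k : ℕ} (α : Fin n → ℕ) {t : Fin n} (ht : (t : ℕ) < k) :
    trunc k α t = α t :=
  if_pos ht

theorem trunc_apply_of_le {k : ℕ} (α : Fin n → ℕ) {t : Fin n} (ht : k ≤ t) :
    trunc k α t = 0 :=
  if_neg (Nat.not_lt.2 ht)

theorem trunc_trunc (i j : ℕ) (α : Fin n → ℕ) : trunc i (trunc j α) = trunc (min i j) α := by
  funext t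
  unfold trunc
  split_ifs <;> first | rfl | omega

theorem trunc_idem (k : ℕ) (α : Fin n → ℕ) : trunc k (trunc k α) = trunc k α := by
  rw [trunc_trunc, min_self]

theorem trunc_of_le {k : ℕ} (hk : n ≤ k) (α : Fin n → ℕ) : trunc k α = α :=
  funext fun t => trunc_apply_of_lt α (t.isLt.trans_le hk)

theorem trunc_le (k : ℕ) (α : Fin n → ℕ) : trunc k α ≤ α := fun t => by
  unfold trunc
  split_ifs <;> simp

theorem trunc_mem_image_trunc_of_le {Δ : Set (Fin n → ℕ)} {j k : ℕ} (hjk : j ≤ k)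
    {α : Fin n → ℕ} (hα : trunc k α ∈ trunc k '' Δ) : trunc j α ∈ trunc j '' Δ := by
  obtain ⟨δ, hδ, hδα⟩ := hα
  refine ⟨δ, hδ, ?_⟩
  rw [← min_eq_left hjk, ← trunc_trunc, hδα, trunc_trunc]

theorem IsDiagram.mem_image_trunc_of_le {Δ : Set (Fin n → ℕ)} (hΔ : IsDiagram Δ) {k : ℕ}
    {x y : Fin n → ℕ} (hx : x ∈ trunc k '' Δ) (hy : trunc k y = y) (hxy : x ≤ y) :
    y ∈ trunc k '' Δ := by
  obtain ⟨δ, hδ, rfl⟩ := hx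
  refine ⟨δ + (y - trunc k δ), hΔ δ hδ _, funext fun t => ?_⟩
  rcases lt_or_ge (t : ℕ) k with ht | ht
  · have := hxy t
    simp only [trunc_apply_of_lt _ ht, Pi.add_apply, Pi.sub_apply] at this ⊢
    omega
  · rw [trunc_apply_of_le _ ht, ← hy, trunc_apply_of_le _ ht]

/-- Downward induction on `k`: the finite-type condition for `t < k` clears coordinate `k`. -/
theorem IsFiniteTypeDiagram.exists_update_trunc_mem {Δ : Set (Fin n → ℕ)}
    (hft : IsFiniteTypeDiagram Δ) {δ : Fin n → ℕ} (hδ : δ ∈ Δ) {t : Fin n} {k : ℕ}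
    (htk : (t : ℕ) < k) : ∃ a, update (trunc k δ) t (δ t + a) ∈ Δ := by
  obtain ⟨d, hd⟩ : ∃ d, n - k = d := ⟨_, rfl⟩
  induction d generalizing k with
  | zero =>
    refine ⟨0, ?_⟩
    rwa [trunc_of_le (by omega), add_zero, update_eq_self]
  | succ d ih =>
    obtain ⟨a, ha⟩ := ih (k := k + 1) (by omega) (by omega)
    obtain ⟨j, rfl⟩ : ∃ j : Fin n, (j : ℕ) = k := ⟨⟨k, by omega⟩, rfl⟩
    obtain ⟨b, hb⟩ := hft t j htk _ ha
    refine ⟨a + b, ?_⟩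
    convert hb using 1
    funext s
    by_cases hst : s = t
    · subst hst
      simp [add_assoc]
    rcases eq_or_ne s j with rfl | hsj
    · simp [hst, trunc]
    · have : (s : ℕ) ≠ j := fun h => hsj (Fin.ext h)
      simp only [update_of_ne hst, update_of_ne hsj, trunc]
      split_ifs <;> first | rfl | omega

theorem IsFiniteTypeDiagram.exists_update_mem_image_trunc {Δ : Set (Fin n → ℕ)}
    (hft : IsFiniteTypeDiagram Δ) {δ : Fin n → ℕ} (hδ : δ ∈ Δ) {t : Fin n} {k : ℕ}
    (htk : (t : ℕ) ≤ k) : ∃ c, update (trunc k δ) t c ∈ trunc (k + 1) '' Δ := by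
  rcases htk.lt_or_eq with htk | rfl
  · obtain ⟨a, ha⟩ := hft.exists_update_trunc_mem hδ htk
    refine ⟨δ t + a, _, ha, funext fun s => ?_⟩
    by_cases hst : s = t
    · subst hst
      simp [trunc_apply_of_lt _ (htk.trans k.lt_succ_self)]
    · simp only [update_of_ne hst, trunc]
      split_ifs <;> first | rfl | omega
  · refine ⟨δ t, δ, hδ, funext fun s => ?_⟩
    by_cases hst : s = t
    · subst hst
      simp [trunc]
    · have : (s : ℕ) ≠ t := fun h => hst (Fin.ext h)
      simp only [update_of_ne hst, trunc]
      split_ifs <;> first | rfl | omega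

end trunc

variable {n : ℕ} {Δ : Set (Fin n → ℕ)}

theorem mem_hironakaPiece_iff {i : ℕ} {α : Fin n → ℕ} :
    α ∈ hironakaPiece Δ i ↔
      (∀ j < i, trunc j α ∈ trunc j '' Δ) ∧ trunc i α ∉ trunc i '' Δ := by
  simp only [hironakaPiece, hironakaA, Set.mem_ofPred_eq, trunc_idem, true_and,
    trunc_trunc, min_eq_left (Nat.sub_le i 1)]
  refine and_congr_left fun _ => ⟨?_, fun h => ?_⟩
  · rintro (rfl | h) j hj
    · omega
    · exact trunc_mem_image_trunc_of_le (by omega) h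
  · rcases Nat.eq_zero_or_pos i with rfl | hi
    · exact Or.inl rfl
    · exact Or.inr (h _ (by omega))

theorem compl_eq_iUnion_hironakaPiece :
    Δᶜ = ⋃ i ∈ Finset.range (n + 1), hironakaPiece Δ i := by
  classical
  ext α
  simp only [Set.mem_compl_iff, Set.mem_iUnion, Finset.mem_range, exists_prop,
    Nat.lt_succ_iff, mem_hironakaPiece_iff]
  constructor
  · intro hα
    have hαn : trunc n α ∉ trunc n '' Δ := by simpa [trunc_of_le le_rfl] using hα
    have hn : ∃ k, trunc k α ∉ trunc k '' Δ := ⟨n, hαn⟩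
    exact ⟨Nat.find hn, Nat.find_min' hn hαn, fun j hj => not_not.1 (Nat.find_min hn hj),
      Nat.find_spec hn⟩
  · rintro ⟨i, -, -, hi⟩ hα
    exact hi ⟨α, hα, rfl⟩

theorem disjoint_hironakaPiece {i j : ℕ} (hij : i ≠ j) :
    Disjoint (hironakaPiece Δ i) (hironakaPiece Δ j) := by
  wlog h : i < j generalizing i j
  · exact (this hij.symm (by omega)).symm
  rw [Set.disjoint_left]
  intro α hi hj
  exact (mem_hironakaPiece_iff.1 hi).2 ((mem_hironakaPiece_iff.1 hj).1 i h)

theorem finite_hironakaA (hΔ : IsDiagram Δ) (hft : IsFiniteTypeDiagram Δ) (i : ℕ) :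
    (hironakaA Δ i).Finite := by
  by_contra hinf
  obtain ⟨β, hβ_mono, hβ, t, hβ_unbdd⟩ := Set.Infinite.exists_monotone_unbounded hinf
  have hti : (t : ℕ) < i := by
    obtain ⟨m, hm⟩ := hβ_unbdd 1
    by_contra! hit
    have := (hβ m).1 ▸ trunc_apply_of_le (β m) hit
    omega
  obtain ⟨δ, hδ, hδβ⟩ := (hβ 0).2.1.resolve_left (by omega)
  obtain ⟨c, hc⟩ := hft.exists_update_mem_image_trunc hδ (t := t) (k := i - 1) (by omega)
  rw [Nat.sub_add_cancel (by omega), hδβ] at hc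
  obtain ⟨m, hm⟩ := hβ_unbdd c
  refine (hβ m).2.2 (hΔ.mem_image_trunc_of_le hc (hβ m).1 fun s => ?_)
  by_cases hst : s = t
  · subst hst
    simpa using hm
  · rw [update_of_ne hst]
    exact (trunc_le _ _ s).trans (hβ_mono (Nat.zero_le m) s)

/-- Hironaka's decomposition: for a diagram `Δ ⊆ ℕ^n` of finite type, the
complement `Γ = ℕ^n \ Δ` is the disjoint union over `i = 0,…,n` of the sets
`A_i × ℕ^{n-i}`, with `A_i = π_{i,i-1}^{-1}(π_{n,i-1}(Δ)) \ π_{ni}(Δ)` finite. -/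
theorem hironaka_decomposition {n : ℕ} (Δ : Set (Fin n → ℕ))
    (hΔ : IsDiagram Δ) (hft : IsFiniteTypeDiagram Δ) :
    (Δᶜ = ⋃ i ∈ Finset.range (n + 1), hironakaPiece Δ i) ∧
    (∀ i j : ℕ, i ≤ n → j ≤ n → i ≠ j →
      Disjoint (hironakaPiece Δ i) (hironakaPiece Δ j)) ∧
    (∀ i : ℕ, i ≤ n → (hironakaA Δ i).Finite) :=
  ⟨compl_eq_iUnion_hironakaPiece, fun _ _ _ _ hij => disjoint_hironakaPiece hij,
    fun i _ => finite_hironakaA hΔ hft i⟩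
end

section
/- Let Δ ⊆ ℕ^n be a diagram such that the sets A_i := π_{i,i-1}^{-1}(π_{n,i-1}(Δ)) \ π_{ni}(Δ) are finite for all i = 1,…,n. Then Δ is of finite type. -/
lemma diagram_mono {n : ℕ} {Δ : Set (Fin n → ℕ)} (hΔ : IsDiagram Δ)
    {δ γ : Fin n → ℕ} (hδ : δ ∈ Δ) (h : ∀ t, δ t ≤ γ t) : γ ∈ Δ := by
  have h2 := hΔ δ hδ (fun t => γ t - δ t)
  have : δ + (fun t => γ t - δ t) = γ := by
    funext t
    have := h t
    simp only [Pi.add_apply]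
    omega
  rwa [this] at h2

/-- Tail-clearing lemma: if we can clear any coordinate `j' > j` (adding to `i`),
then from `δ ∈ Δ` we can get `update (trunc (j+1) δ) i (δ i + b) ∈ Δ`. -/
lemma clear_tail {n : ℕ} {Δ : Set (Fin n → ℕ)} (_hΔ : IsDiagram Δ)
    {i j : Fin n} (hij : i < j)
    (hgt : ∀ j' : Fin n, j < j' → ∀ δ ∈ Δ,
      ∃ a, Function.update (Function.update δ j' 0) i (δ i + a) ∈ Δ) :
    ∀ m : ℕ, ∀ δ ∈ Δ, trunc ((j : ℕ) + 1 + m) δ = δ →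
      ∃ b, Function.update (trunc ((j : ℕ) + 1) δ) i (δ i + b) ∈ Δ := by
  have hijn : (i : ℕ) < (j : ℕ) := hij
  intro m
  induction m with
  | zero =>
    intro δ hδ hsup
    refine ⟨0, ?_⟩
    rw [Nat.add_zero] at hsup
    rw [hsup, Nat.add_zero, Function.update_eq_self]
    exact hδ
  | succ m ih =>
    intro δ hδ hsup
    by_cases h : (j : ℕ) + 1 + m < n
    · set c : Fin n := ⟨(j : ℕ) + 1 + m, h⟩ with hc
      have hjc : j < c := by
        simp only [Fin.lt_def, hc]
        omega
      obtain ⟨a', hδ₂⟩ := hgt c hjc δ hδ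
      set δ₂ : Fin n → ℕ := Function.update (Function.update δ c 0) i (δ i + a') with hδ₂def
      have hsup₂ : trunc ((j : ℕ) + 1 + m) δ₂ = δ₂ := by
        funext t
        simp only [trunc]
        split_ifs with ht
        · rfl
        · have hti : t ≠ i := by
            intro he; subst he; omega
          by_cases htc : t = c
          · subst htc
            simp [hδ₂def, Function.update_apply, hti]
          · have htn : ¬ ((t : ℕ) < (j : ℕ) + 1 + (m + 1)) := by
              have : (t : ℕ) ≠ (c : ℕ) := fun he => htc (Fin.ext he)
              simp only [hc] at this
              omega
            have hδt : δ t = 0 := by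
              have := congrFun hsup t
              simp only [trunc, if_neg htn] at this
              exact this.symm
            simp [hδ₂def, Function.update_apply, hti, htc, hδt]
      obtain ⟨b, hb⟩ := ih δ₂ hδ₂ hsup₂
      refine ⟨a' + b, ?_⟩
      have heq : Function.update (trunc ((j : ℕ) + 1) δ) i (δ i + (a' + b))
          = Function.update (trunc ((j : ℕ) + 1) δ₂) i (δ₂ i + b) := by
        funext t
        by_cases hti : t = i
        · subst hti
          simp [hδ₂def, Function.update_apply]
          omega
        · simp only [Function.update_apply, if_neg hti]
          simp only [trunc]
          split_ifs with ht
          · have htc : t ≠ c := by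
              intro he; subst he
              simp only [hc] at ht
              omega
            simp [hδ₂def, Function.update_apply, hti, htc]
          · rfl
      rw [heq]
      exact hb
    · have hsup' : trunc ((j : ℕ) + 1 + m) δ = δ := by
        funext t
        simp only [trunc]
        rw [if_pos (by omega : (t : ℕ) < (j : ℕ) + 1 + m)]
      exact ih δ hδ hsup'

/-- If `Δ ⊆ ℕ^n` is a diagram such that the sets
`A_i = π_{i,i-1}^{-1}(π_{n,i-1}(Δ)) \ π_{ni}(Δ)` are finite for `i = 1,…,n`,
then `Δ` is of finite type. -/
theorem finite_A_isFiniteTypeDiagram {n : ℕ} (Δ : Set (Fin n → ℕ))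
    (hΔ : IsDiagram Δ)
    (hfin : ∀ i : ℕ, 1 ≤ i → i ≤ n → (hironakaA Δ i).Finite) :
    IsFiniteTypeDiagram Δ := by
  suffices H : ∀ m : ℕ, ∀ j : Fin n, n - (j : ℕ) ≤ m → ∀ i : Fin n, i < j → ∀ α ∈ Δ,
      ∃ a, Function.update (Function.update α j 0) i (α i + a) ∈ Δ by
    intro i j hij α hα
    exact H n j (by omega) i hij α hα
  intro m
  induction m with
  | zero =>
    intro j hj
    have := j.isLt
    omega
  | succ m ih =>
    intro j hj i hij α hα
    have hijn : (i : ℕ) < (j : ℕ) := hij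
    have hjn := j.isLt
    have hgt : ∀ j' : Fin n, j < j' → ∀ δ ∈ Δ,
        ∃ a, Function.update (Function.update δ j' 0) i (δ i + a) ∈ Δ := by
      intro j' hjj' δ hδ
      have h1 : (j : ℕ) < (j' : ℕ) := hjj'
      exact ih j' (by omega) i (lt_trans hij hjj') δ hδ
    -- the candidate projections
    set β : ℕ → (Fin n → ℕ) :=
      fun a => Function.update (trunc (j : ℕ) α) i (α i + a) with hβ
    have hβj : ∀ a, ∀ t : Fin n, (j : ℕ) ≤ (t : ℕ) → β a t = 0 := by
      intro a t ht
      have hti : t ≠ i := by intro he; subst he; omega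
      simp only [hβ, Function.update_apply, if_neg hti, trunc]
      rw [if_neg (by omega : ¬ ((t : ℕ) < (j : ℕ)))]
    have hβtr : ∀ a, trunc (j : ℕ) (β a) = β a := by
      intro a
      funext t
      simp only [trunc]
      split_ifs with ht
      · rfl
      · exact (hβj a t (by omega)).symm
    have hβtr1 : ∀ a, trunc ((j : ℕ) + 1) (β a) = β a := by
      intro a
      funext t
      simp only [trunc]
      split_ifs with ht
      · rfl
      · exact (hβj a t (by omega)).symm
    have hβim : ∀ a, β a ∈ trunc (j : ℕ) '' Δ := by
      intro a
      refine ⟨α + fun t => if t = i then a else 0, hΔ α hα _, ?_⟩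
      funext t
      by_cases hti : t = i
      · simp only [trunc, Pi.add_apply, if_pos hti, hβ, Function.update_apply, if_pos hti,
          hti]
        simp only [if_true]
        rw [if_pos (by omega : ((i : ℕ) < (j : ℕ)))]
      · simp only [trunc, Pi.add_apply, if_neg hti, hβ, Function.update_apply]
        split_ifs with ht
        · simp
        · rfl
    have hmemA : ∀ a, β a ∉ trunc ((j : ℕ) + 1) '' Δ → β a ∈ hironakaA Δ ((j : ℕ) + 1) := by
      intro a hn
      refine ⟨hβtr1 a, Or.inr ?_, hn⟩
      simp only [Nat.add_sub_cancel]
      rw [hβtr a]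
      exact hβim a
    have hex : ∃ a, β a ∈ trunc ((j : ℕ) + 1) '' Δ := by
      by_contra hcon
      push_neg at hcon
      have hinj : Function.Injective β := by
        intro a b hab
        have := congrFun hab i
        simp only [hβ, Function.update_self] at this
        omega
      have hall : ∀ a, β a ∈ hironakaA Δ ((j : ℕ) + 1) := fun a => hmemA a (hcon a)
      exact (Set.infinite_of_injective_forall_mem hinj hall)
        (hfin ((j : ℕ) + 1) (by omega) (by omega))
    obtain ⟨a, δ, hδ, htr⟩ := hex
    have hδi : δ i = α i + a := by
      have h1 := congrFun htr i
      simp only [trunc, if_pos (by omega : (i : ℕ) < (j : ℕ) + 1)] at h1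
      rw [h1]
      simp [hβ, Function.update_apply]
    obtain ⟨b, hb⟩ := clear_tail hΔ hij hgt n δ hδ (by
      funext t
      simp only [trunc]
      rw [if_pos (by have := t.isLt; omega : (t : ℕ) < (j : ℕ) + 1 + n)])
    rw [htr, hδi] at hb
    refine ⟨a + b, diagram_mono hΔ hb ?_⟩
    intro t
    by_cases hti : t = i
    · subst hti
      simp only [Function.update_self]
      omega
    · simp only [Function.update_apply, if_neg hti]
      simp only [hβ, Function.update_apply, if_neg hti, trunc]
      split_ifs with h1 h2
      · exfalso
        have : (t : ℕ) = (j : ℕ) := by rw [h2]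
        omega
      · exact le_refl _
      · exact Nat.zero_le _
      · exact Nat.zero_le _
end

section
/- Let Δ = ⋃_{s=1}^k Δ_s be a diagram of finite type where Δ_s = α^s + ℕ^n and the vertices α^1 ≤_r α^2 ≤_r … ≤_r α^k are ordered by the reverse lexicographic order. Then for any r ≤ k, the partial union Δ^r = ⋃_{s=1}^r (α^s + ℕ^n) is also a diagram of finite type. -/
/-- The translated quadrant `v + ℕ^n`. -/
def upSet {n : ℕ} (v : Fin n → ℕ) : Set (Fin n → ℕ) := {β | ∀ t, v t ≤ β t}

/-- The reverse lexicographic order on `ℕ^n`: compare the coordinates starting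
from the last one (the order given by the linear forms `(x_n, …, x_1)`
lexicographically). -/
def RevLexLE {n : ℕ} (a b : Fin n → ℕ) : Prop :=
  a = b ∨ ∃ j : Fin n, a j < b j ∧ ∀ t : Fin n, j < t → a t = b t

/-- If `Δ = ⋃_{s=1}^k (α^s + ℕ^n)` is a diagram of finite type with vertices
ordered by the reverse lexicographic order, then every partial union
`Δ^r = ⋃_{s=1}^r (α^s + ℕ^n)` is also a diagram of finite type. -/
theorem partial_union_isFiniteTypeDiagram {n k : ℕ} (α : Fin k → (Fin n → ℕ))
    (hsort : ∀ s t : Fin k, s ≤ t → RevLexLE (α s) (α t))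
    (hft : IsFiniteTypeDiagram (⋃ s : Fin k, upSet (α s)))
    (r : ℕ) (hr : r ≤ k) :
    IsDiagram (⋃ s : Fin k, ⋃ (_ : (s : ℕ) < r), upSet (α s)) ∧
      IsFiniteTypeDiagram (⋃ s : Fin k, ⋃ (_ : (s : ℕ) < r), upSet (α s)) := by
  constructor
  · intro x hx β
    simp only [Set.mem_iUnion] at hx ⊢
    obtain ⟨s, hs, hx⟩ := hx
    exact ⟨s, hs, fun t => le_trans (hx t) (Nat.le_add_right _ _)⟩
  · intro i j hij β hβ
    simp only [Set.mem_iUnion] at hβ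
    obtain ⟨s, hs, hβ⟩ := hβ
    have hij' : i ≠ j := ne_of_lt hij
    by_cases hzero : α s j = 0
    · refine ⟨0, ?_⟩
      simp only [Set.mem_iUnion]
      refine ⟨s, hs, fun m => ?_⟩
      rcases eq_or_ne m i with rfl | hmi
      · rw [Function.update_self]
        exact le_trans (hβ m) (Nat.le_add_right _ _)
      · rw [Function.update_of_ne hmi]
        rcases eq_or_ne m j with rfl | hmj
        · rw [Function.update_self, hzero]
        · rw [Function.update_of_ne hmj]; exact hβ m
    · have hαs : α s ∈ ⋃ t : Fin k, upSet (α t) :=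
        Set.mem_iUnion.2 ⟨s, fun m => le_refl _⟩
      obtain ⟨a, hδ⟩ := hft i j hij (α s) hαs
      rw [Set.mem_iUnion] at hδ
      obtain ⟨t, hδ⟩ := hδ
      set δ := Function.update (Function.update (α s) j 0) i (α s i + a) with hδdef
      have hδj : δ j = 0 := by
        rw [hδdef, Function.update_of_ne (Ne.symm hij'), Function.update_self]
      have hδi : δ i = α s i + a := Function.update_self _ _ _
      have hδm : ∀ m, m ≠ i → m ≠ j → δ m = α s m := fun m hmi hmj => by
        rw [hδdef, Function.update_of_ne hmi, Function.update_of_ne hmj]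
      -- the shifted point for β lands in the same upSet as δ
      have key : ∀ u : Fin k, δ ∈ upSet (α u) →
          Function.update (Function.update β j 0) i (β i + a) ∈ upSet (α u) := by
        intro u hu m
        rcases eq_or_ne m i with rfl | hmi
        · rw [Function.update_self]
          have h1 := hu m; rw [hδi] at h1
          exact le_trans h1 (Nat.add_le_add_right (hβ m) a)
        · rw [Function.update_of_ne hmi]
          rcases eq_or_ne m j with rfl | hmj
          · rw [Function.update_self]
            have h1 := hu m; rw [hδj] at h1; exact h1
          · rw [Function.update_of_ne hmj]
            have h1 := hu m; rw [hδm m hmi hmj] at h1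
            exact le_trans h1 (hβ m)
      by_cases htr : (t : ℕ) < r
      · exact ⟨a, Set.mem_iUnion.2 ⟨t, Set.mem_iUnion.2 ⟨htr, key t hδ⟩⟩⟩
      · have hst : s ≤ t := by
          have : (s : ℕ) ≤ (t : ℕ) := by omega
          exact Fin.le_def.2 this
        rcases hsort s t hst with heq | ⟨j0, hj0lt, hj0agree⟩
        · refine ⟨a, Set.mem_iUnion.2 ⟨s, Set.mem_iUnion.2 ⟨hs, key s ?_⟩⟩⟩
          rw [heq]; exact hδ
        · exfalso
          have h1 : α t j0 ≤ δ j0 := hδ j0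
          have h2 : α t j ≤ δ j := hδ j
          rw [hδj] at h2
          rcases eq_or_ne j0 i with rfl | hne
          · have h3 := hj0agree j hij
            omega
          · rcases eq_or_ne j0 j with rfl | hnej
            · omega
            · rw [hδm j0 hne hnej] at h1; omega
end

section
/- Weierstrass-Hironaka formal division: Let K be a field, T̄ a total positive monomial order on ℕ^n, and f_1,…,f_k ∈ K[[u_1,…,u_n, v_1,…,v_m]] formal power series such that the initial exponents α_i := exp_{T̄}(f_i(u,0)) ∈ ℕ^n exist. Let Δ = ⋃ Δ_i be the associated decomposition of ℕ^n into Γ ∪ Δ_1 ∪ … ∪ Δ_k with Δ_i = α_i + Γ_i. Then for every g ∈ K[[u,v]] there exist unique h_i, r ∈ K[[u,v]] with supp(h_i) ⊆ Γ_i × ℕ^m, supp(r) ⊆ Γ × ℕ^m, and g = Σ h_i f_i + r. -/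
/-!
Every exponent `d ∈ ℕ^n × ℕ^m` is the slot of exactly one unknown coefficient of a division
`g = Σ h_i f_i + r` with the prescribed supports: that of `r` at `d` if the `u`-part of `d` lies
in `Γ`, that of `h_i` at `d - α_i` if it lies in `Δ_i`. In the equation for the coefficient of
`g` at `d`, the unknown of slot `d` appears with the factor `1` or the leading coefficient of
`f_i(u, 0)`, and every other unknown sits in a strictly smaller slot: a term of `f_i` with
exponent `s ≠ α_i` exceeds `α_i` in `v`-degree or, at `v`-degree zero, in the order `T̄`.
Because `T̄` has nonnegative coefficients, the order on slots (`v`-degree, then `T̄` of the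
`u`-part) is monotone for the componentwise order, hence well founded by Dickson's lemma, and
a triangular system along a well-founded order has exactly one solution.
-/

/-- The value `T̄(a) ∈ ℝ^r` of the tuple of linear forms with coefficient
matrix `c` at `a ∈ ℕ^n`. -/
def tvec {n r : ℕ} (c : Fin r → Fin n → ℝ) (a : Fin n →₀ ℕ) : Fin r → ℝ :=
  fun i => ∑ j, c i j * (a j : ℝ)

/-- The translated quadrant `v + ℕ^n`. -/
def quad {n : ℕ} (v : Fin n →₀ ℕ) : Set (Fin n →₀ ℕ) := {b | ∃ g, b = v + g}

/-- `Δ_i = (α_i + ℕ^n) \ ⋃_{j<i} (α_j + ℕ^n)`. -/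
def deltaI {n k : ℕ} (α : Fin k → (Fin n →₀ ℕ)) (i : Fin k) : Set (Fin n →₀ ℕ) :=
  quad (α i) \ ⋃ (j : Fin k) (_ : j < i), quad (α j)

/-- `Γ = ℕ^n \ ⋃_i (α_i + ℕ^n)`. -/
def gammaSet {n k : ℕ} (α : Fin k → (Fin n →₀ ℕ)) : Set (Fin n →₀ ℕ) :=
  (⋃ i : Fin k, quad (α i))ᶜ

/-- `Γ_i = Δ_i − α_i`. -/
def gammaI {n k : ℕ} (α : Fin k → (Fin n →₀ ℕ)) (i : Fin k) : Set (Fin n →₀ ℕ) :=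
  {g | α i + g ∈ deltaI α i}

/-- The inclusion `ℕ^n ⊆ ℕ^n × ℕ^m` of exponents (extension by zero on the
`v`-variables). -/
noncomputable def inclU {n m : ℕ} (a : Fin n →₀ ℕ) : (Fin n ⊕ Fin m) →₀ ℕ :=
  a.mapDomain Sum.inl

/-- The projection `ℕ^n × ℕ^m → ℕ^n` of exponents onto the `u`-part. -/
noncomputable def projU {n m : ℕ} (d : (Fin n ⊕ Fin m) →₀ ℕ) : Fin n →₀ ℕ :=
  d.comapDomain Sum.inl Sum.inl_injective.injOn

open MvPowerSeries

theorem Monotone.wellFounded_invImage_lt {α β : Type*} [Preorder α] [WellQuasiOrderedLE α]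
    [Preorder β] {φ : α → β} (hφ : Monotone φ) : WellFounded (InvImage (· < ·) φ) :=
  Set.wellFoundedOn_univ.mp <| (Set.wellFoundedOn_image (f := φ) (r := (· < ·))).mp
    ((Set.isPWO_of_wellQuasiOrderedLE Set.univ).image_of_monotone hφ).isWF

theorem WellFounded.existsUnique_of_triangular {ι K : Type*} [DivisionRing K]
    {R : ι → ι → Prop} (hR : WellFounded R) (F : ι → (ι → K) → K)
    (hF : ∀ d, ∃ u ≠ (0 : K), ∀ x y : ι → K, (∀ d', R d' d → x d' = y d') →
      F d x - u * x d = F d y - u * y d)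
    (b : ι → K) : ∃! x : ι → K, ∀ d, F d x = b d := by
  classical
  choose u hu hF using hF
  let below (d : ι) (x : ∀ d', R d' d → K) : ι → K := fun d' => if h : R d' d then x d' h else 0
  let x := hR.fix fun d x => (u d)⁻¹ * (b d - (F d (below d x) - u d * below d x d))
  have hx (d : ι) : F d x = b d := by
    have hxd : x d = (u d)⁻¹ * (b d - (F d x - u d * x d)) := by
      refine (hR.fix_eq _ d).trans ?_
      rw [hF d (below d fun d' _ => x d') x fun d' hd' => dif_pos hd']
    have := congrArg (u d * ·) hxd
    rwa [mul_inv_cancel_left₀ (hu d), eq_sub_iff_add_eq, add_sub_cancel] at this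
  refine ⟨x, hx, fun y hy => funext fun d => hR.induction (C := fun d => y d = x d) d
    fun d ih => mul_left_cancel₀ (hu d) ?_⟩
  have := hF d y x ih
  rwa [hy d, hx d, sub_right_inj] at this

section Exponents

variable {n m r : ℕ}

lemma tvec_add (c : Fin r → Fin n → ℝ) (a b : Fin n →₀ ℕ) :
    tvec c (a + b) = tvec c a + tvec c b := by
  funext i
  simp only [tvec, Pi.add_apply, Finsupp.add_apply, Nat.cast_add, mul_add, Finset.sum_add_distrib]

lemma tvec_mono {c : Fin r → Fin n → ℝ} (hc : ∀ i j, 0 ≤ c i j) : Monotone (tvec c) :=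
  fun _ _ hab i => Finset.sum_le_sum fun j _ =>
    mul_le_mul_of_nonneg_left (Nat.cast_le.mpr (hab j)) (hc i j)

@[simp]
lemma projU_apply (d : (Fin n ⊕ Fin m) →₀ ℕ) (x : Fin n) : projU d x = d (Sum.inl x) := rfl

@[simp]
lemma inclU_apply_inl (a : Fin n →₀ ℕ) (x : Fin n) :
    (inclU a : (Fin n ⊕ Fin m) →₀ ℕ) (Sum.inl x) = a x :=
  Finsupp.mapDomain_apply Sum.inl_injective a x

@[simp]
lemma inclU_apply_inr (a : Fin n →₀ ℕ) (y : Fin m) :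
    (inclU a : (Fin n ⊕ Fin m) →₀ ℕ) (Sum.inr y) = 0 :=
  Finsupp.mapDomain_of_notMem_range a _ (by simp)

@[simp]
lemma projU_add (d e : (Fin n ⊕ Fin m) →₀ ℕ) : projU (d + e) = projU d + projU e := by
  ext; simp

@[simp]
lemma projU_inclU (a : Fin n →₀ ℕ) : projU (inclU a : (Fin n ⊕ Fin m) →₀ ℕ) = a := by
  ext; simp

lemma projU_mono : Monotone (projU : ((Fin n ⊕ Fin m) →₀ ℕ) → Fin n →₀ ℕ) :=
  fun _ _ h x => h (Sum.inl x)

def vDegree (d : (Fin n ⊕ Fin m) →₀ ℕ) : ℕ := ∑ j, d (Sum.inr j)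

@[simp]
lemma vDegree_add (d e : (Fin n ⊕ Fin m) →₀ ℕ) : vDegree (d + e) = vDegree d + vDegree e := by
  simp [vDegree, Finset.sum_add_distrib]

@[simp]
lemma vDegree_inclU (a : Fin n →₀ ℕ) : vDegree (inclU a : (Fin n ⊕ Fin m) →₀ ℕ) = 0 := by
  simp [vDegree]

lemma vDegree_mono : Monotone (vDegree : ((Fin n ⊕ Fin m) →₀ ℕ) → ℕ) :=
  fun _ _ h => Finset.sum_le_sum fun j _ => h (Sum.inr j)

lemma eq_inclU_projU_of_vDegree_eq_zero {d : (Fin n ⊕ Fin m) →₀ ℕ} (hd : vDegree d = 0) :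
    d = inclU (projU d) := by
  ext (x | y)
  · simp
  · simpa using Finset.sum_eq_zero_iff.mp hd y (Finset.mem_univ y)

noncomputable def divKey (c : Fin r → Fin n → ℝ) (d : (Fin n ⊕ Fin m) →₀ ℕ) :
    ℕ ×ₗ Lex (Fin r → ℝ) :=
  toLex (vDegree d, toLex (tvec c (projU d)))

lemma wellFounded_divKey {c : Fin r → Fin n → ℝ} (hc : ∀ i j, 0 ≤ c i j) :
    WellFounded (InvImage (· < ·) (divKey (m := m) c)) :=
  Monotone.wellFounded_invImage_lt fun _ _ h =>
    Prod.Lex.toLex_mono ⟨vDegree_mono h, Pi.toLex_monotone (tvec_mono hc (projU_mono h))⟩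

def IsInitialExponent (c : Fin r → Fin n → ℝ) {K : Type*} [Semiring K]
    (F : MvPowerSeries (Fin n ⊕ Fin m) K) (a : Fin n →₀ ℕ) : Prop :=
  coeff (inclU a) F ≠ 0 ∧
    ∀ b : Fin n →₀ ℕ, coeff (inclU b) F ≠ 0 → b ≠ a → toLex (tvec c a) < toLex (tvec c b)

lemma divKey_add_inclU_lt {c : Fin r → Fin n → ℝ} {K : Type*} [Semiring K]
    {F : MvPowerSeries (Fin n ⊕ Fin m) K} {a : Fin n →₀ ℕ} (hF : IsInitialExponent c F a)
    {s : (Fin n ⊕ Fin m) →₀ ℕ} (hs : coeff s F ≠ 0) (hsa : s ≠ inclU a)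
    (e : (Fin n ⊕ Fin m) →₀ ℕ) : divKey c (e + inclU a) < divKey c (e + s) := by
  rw [divKey, divKey, Prod.Lex.toLex_lt_toLex]
  simp only [vDegree_add, vDegree_inclU, projU_add, projU_inclU, tvec_add, toLex_add]
  rcases Nat.eq_zero_or_pos (vDegree s) with hv | hv
  · have hs_eq := eq_inclU_projU_of_vDegree_eq_zero hv
    refine Or.inr ⟨by rw [hv], add_lt_add_right (hF.2 _ (hs_eq ▸ hs) ?_) _⟩
    rintro rfl
    exact hsa hs_eq
  · exact Or.inl (by omega)

end Exponents

section Regions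

variable {n m k : ℕ} (α : Fin k → (Fin n →₀ ℕ))

lemma mem_gammaSet_or_exists_mem_deltaI (p : Fin n →₀ ℕ) :
    p ∈ gammaSet α ∨ ∃ i, p ∈ deltaI α i := by
  by_cases h : ∃ i, p ∈ quad (α i)
  · obtain ⟨i, hi, hmin⟩ := WellFounded.has_min wellFounded_lt {i | p ∈ quad (α i)} h
    refine Or.inr ⟨i, hi, ?_⟩
    simp only [Set.mem_iUnion]
    exact fun ⟨j, hji, hj⟩ => hmin j hj hji
  · exact Or.inl fun hp => h (Set.mem_iUnion.mp hp)

variable {α}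

lemma eq_of_mem_deltaI {i j : Fin k} {p : Fin n →₀ ℕ} (hi : p ∈ deltaI α i)
    (hj : p ∈ deltaI α j) : i = j := by
  by_contra hne
  rcases lt_or_gt_of_ne hne with h | h
  · exact hj.2 (Set.mem_biUnion h hi.1)
  · exact hi.2 (Set.mem_biUnion h hj.1)

lemma notMem_gammaSet_of_mem_deltaI {i : Fin k} {p : Fin n →₀ ℕ} (hi : p ∈ deltaI α i) :
    p ∉ gammaSet α :=
  fun hp => hp (Set.mem_iUnion.mpr ⟨i, hi.1⟩)

lemma inclU_le_of_mem_deltaI {i : Fin k} {d : (Fin n ⊕ Fin m) →₀ ℕ}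
    (hd : projU d ∈ deltaI α i) : inclU (α i) ≤ d := by
  obtain ⟨g, hg⟩ := hd.1
  rintro (x | y)
  · have := congrArg (· x) hg
    simp only [projU_apply, Finsupp.add_apply] at this
    simp [this]
  · simp

lemma projU_add_inclU_mem_deltaI_iff {i : Fin k} {e : (Fin n ⊕ Fin m) →₀ ℕ} :
    projU (e + inclU (α i)) ∈ deltaI α i ↔ projU e ∈ gammaI α i := by
  rw [projU_add, projU_inclU, add_comm]
  rfl

end Regions

section Encoding

variable {K : Type*} {n m k : ℕ} (α : Fin k → (Fin n →₀ ℕ))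

open scoped Classical in
noncomputable def divQuotient [Zero K] (x : ((Fin n ⊕ Fin m) →₀ ℕ) → K) (i : Fin k) :
    MvPowerSeries (Fin n ⊕ Fin m) K :=
  fun e => if projU e ∈ gammaI α i then x (e + inclU (α i)) else 0

open scoped Classical in
noncomputable def divRemainder [Zero K] (x : ((Fin n ⊕ Fin m) →₀ ℕ) → K) :
    MvPowerSeries (Fin n ⊕ Fin m) K :=
  fun d => if projU d ∈ gammaSet α then x d else 0

def HasDivisionSupport [Semiring K] (h : Fin k → MvPowerSeries (Fin n ⊕ Fin m) K)
    (ρ : MvPowerSeries (Fin n ⊕ Fin m) K) : Prop :=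
  (∀ i d, coeff d (h i) ≠ 0 → projU d ∈ gammaI α i) ∧
    (∀ d, coeff d ρ ≠ 0 → projU d ∈ gammaSet α)

variable {α} [Semiring K] {x : ((Fin n ⊕ Fin m) →₀ ℕ) → K} {i : Fin k}
  {d e : (Fin n ⊕ Fin m) →₀ ℕ}

lemma coeff_divQuotient_of_mem (he : projU e ∈ gammaI α i) :
    coeff e (divQuotient α x i) = x (e + inclU (α i)) :=
  if_pos he

lemma coeff_divQuotient_of_notMem (he : projU e ∉ gammaI α i) :
    coeff e (divQuotient α x i) = 0 :=
  if_neg he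

lemma coeff_divQuotient_sub_inclU (hd : projU d ∈ deltaI α i) :
    coeff (d - inclU (α i)) (divQuotient α x i) = x d := by
  have hle := inclU_le_of_mem_deltaI hd
  rw [coeff_divQuotient_of_mem, tsub_add_cancel_of_le hle]
  rwa [← projU_add_inclU_mem_deltaI_iff, tsub_add_cancel_of_le hle]

lemma coeff_divRemainder_of_mem (hd : projU d ∈ gammaSet α) :
    coeff d (divRemainder α x) = x d :=
  if_pos hd

lemma coeff_divRemainder_of_notMem (hd : projU d ∉ gammaSet α) :
    coeff d (divRemainder α x) = 0 :=
  if_neg hd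

variable (α x) in
lemma hasDivisionSupport_divQuotient_divRemainder :
    HasDivisionSupport α (divQuotient α x) (divRemainder α x) :=
  ⟨fun _ _ hd => by_contra fun he => hd (coeff_divQuotient_of_notMem he),
    fun _ hd => by_contra fun he => hd (coeff_divRemainder_of_notMem he)⟩

variable {h : Fin k → MvPowerSeries (Fin n ⊕ Fin m) K} {ρ : MvPowerSeries (Fin n ⊕ Fin m) K}

lemma HasDivisionSupport.coeff_mul_monomial_eq_zero (hS : HasDivisionSupport α h ρ) (a : K)
    (hd : projU d ∉ deltaI α i) : coeff d (h i * monomial (inclU (α i)) a) = 0 := by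
  rw [coeff_mul_monomial]
  split_ifs with hle
  · rw [not_imp_comm.mp (hS.1 i _) fun he => hd ?_, zero_mul]
    rwa [← projU_add_inclU_mem_deltaI_iff, tsub_add_cancel_of_le hle] at he
  · rfl

lemma HasDivisionSupport.coeff_sum_mul_monomial_add_of_mem_gammaSet
    (hS : HasDivisionSupport α h ρ) (a : Fin k → K) (hd : projU d ∈ gammaSet α) :
    coeff d (∑ i, h i * monomial (inclU (α i)) (a i) + ρ) = coeff d ρ := by
  rw [map_add, map_sum, Finset.sum_eq_zero fun i _ => hS.coeff_mul_monomial_eq_zero (a i)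
    fun hi => notMem_gammaSet_of_mem_deltaI hi hd, zero_add]

lemma HasDivisionSupport.coeff_sum_mul_monomial_add_of_mem_deltaI
    (hS : HasDivisionSupport α h ρ) (a : Fin k → K) (hd : projU d ∈ deltaI α i) :
    coeff d (∑ i, h i * monomial (inclU (α i)) (a i) + ρ) =
      coeff (d - inclU (α i)) (h i) * a i := by
  have hρ : coeff d ρ = 0 := not_imp_comm.mp (hS.2 d) (notMem_gammaSet_of_mem_deltaI hd)
  rw [map_add, map_sum, hρ, add_zero, Finset.sum_eq_single i (fun j _ hji =>
    hS.coeff_mul_monomial_eq_zero (a j) fun hj => hji (eq_of_mem_deltaI hj hd)) (by simp),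
    coeff_mul_monomial, if_pos (inclU_le_of_mem_deltaI hd)]

lemma HasDivisionSupport.exists_eq (hS : HasDivisionSupport α h ρ) :
    ∃ x : ((Fin n ⊕ Fin m) →₀ ℕ) → K, h = divQuotient α x ∧ ρ = divRemainder α x := by
  refine ⟨fun d => coeff d (∑ i, h i * monomial (inclU (α i)) 1 + ρ),
    funext fun i => MvPowerSeries.ext fun e => ?_, MvPowerSeries.ext fun d => ?_⟩
  · by_cases he : projU e ∈ gammaI α i
    · rw [coeff_divQuotient_of_mem he, hS.coeff_sum_mul_monomial_add_of_mem_deltaI _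
        (projU_add_inclU_mem_deltaI_iff.mpr he), add_tsub_cancel_right, mul_one]
    · rw [coeff_divQuotient_of_notMem he]
      exact not_imp_comm.mp (hS.1 i e) he
  · by_cases hd : projU d ∈ gammaSet α
    · rw [coeff_divRemainder_of_mem hd, hS.coeff_sum_mul_monomial_add_of_mem_gammaSet _ hd]
    · rw [coeff_divRemainder_of_notMem hd]
      exact not_imp_comm.mp (hS.2 d) hd

end Encoding

section Triangular

variable {K : Type*} [Field K] {n m k r : ℕ} {c : Fin r → Fin n → ℝ}

lemma IsInitialExponent.coeff_mul_sub_monomial_congr {F : MvPowerSeries (Fin n ⊕ Fin m) K}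
    {a : Fin n →₀ ℕ} (hF : IsInitialExponent c F a) {w w' : MvPowerSeries (Fin n ⊕ Fin m) K}
    {d : (Fin n ⊕ Fin m) →₀ ℕ}
    (hw : ∀ e, divKey c (e + inclU a) < divKey c d → coeff e w = coeff e w') :
    coeff d (w * (F - monomial (inclU a) (coeff (inclU a) F))) =
      coeff d (w' * (F - monomial (inclU a) (coeff (inclU a) F))) := by
  rw [coeff_mul, coeff_mul]
  refine Finset.sum_congr rfl fun p hp => ?_
  by_cases hs : p.2 = inclU a
  · simp [hs]
  by_cases hFs : coeff p.2 F = 0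
  · simp [coeff_monomial_ne hs, hFs]
  rw [hw p.1 (Finset.HasAntidiagonal.mem_antidiagonal.mp hp ▸ divKey_add_inclU_lt hF hFs hs p.1)]

lemma exists_coeff_sum_divQuotient_mul_monomial_add_divRemainder (α : Fin k → (Fin n →₀ ℕ))
    {a : Fin k → K} (ha : ∀ i, a i ≠ 0) (d : (Fin n ⊕ Fin m) →₀ ℕ) :
    ∃ u ≠ (0 : K), ∀ x, coeff d
      (∑ i, divQuotient α x i * monomial (inclU (α i)) (a i) + divRemainder α x) = u * x d := by
  rcases mem_gammaSet_or_exists_mem_deltaI α (projU d) with hd | ⟨i, hd⟩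
  · refine ⟨1, one_ne_zero, fun x => ?_⟩
    rw [(hasDivisionSupport_divQuotient_divRemainder α x).coeff_sum_mul_monomial_add_of_mem_gammaSet
      a hd, coeff_divRemainder_of_mem hd, one_mul]
  · refine ⟨a i, ha i, fun x => ?_⟩
    rw [(hasDivisionSupport_divQuotient_divRemainder α x).coeff_sum_mul_monomial_add_of_mem_deltaI
      a hd, coeff_divQuotient_sub_inclU hd, mul_comm]

lemma coeff_sum_divQuotient_mul_add_divRemainder_triangular
    {f : Fin k → MvPowerSeries (Fin n ⊕ Fin m) K} {α : Fin k → (Fin n →₀ ℕ)} (hf : ∀ i, IsInitialExponent c (f i) (α i))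
    (d : (Fin n ⊕ Fin m) →₀ ℕ) :
    ∃ u ≠ (0 : K), ∀ x y : ((Fin n ⊕ Fin m) →₀ ℕ) → K,
      (∀ d', divKey c d' < divKey c d → x d' = y d') →
      coeff d (∑ i, divQuotient α x i * f i + divRemainder α x) - u * x d =
        coeff d (∑ i, divQuotient α y i * f i + divRemainder α y) - u * y d := by
  set lc := fun i => coeff (inclU (α i)) (f i)
  have hsplit (x : ((Fin n ⊕ Fin m) →₀ ℕ) → K) :
      coeff d (∑ i, divQuotient α x i * f i + divRemainder α x) =
        coeff d (∑ i, divQuotient α x i * monomial (inclU (α i)) (lc i) + divRemainder α x) +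
          ∑ i, coeff d (divQuotient α x i * (f i - monomial (inclU (α i)) (lc i))) := by
    rw [← map_sum, ← map_add]
    congr 1
    simp only [mul_sub, Finset.sum_sub_distrib]
    abel
  obtain ⟨u, hu, hlead⟩ :=
    exists_coeff_sum_divQuotient_mul_monomial_add_divRemainder α (fun i => (hf i).1) d
  refine ⟨u, hu, fun x y hxy => ?_⟩
  rw [hsplit, hsplit, hlead, hlead, add_sub_cancel_left, add_sub_cancel_left]
  refine Finset.sum_congr rfl fun i _ => (hf i).coeff_mul_sub_monomial_congr fun e he => ?_
  by_cases hei : projU e ∈ gammaI α i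
  · rw [coeff_divQuotient_of_mem hei, coeff_divQuotient_of_mem hei, hxy _ he]
  · rw [coeff_divQuotient_of_notMem hei, coeff_divQuotient_of_notMem hei]

end Triangular

theorem weierstrass_hironaka_formal_division_general {K : Type*} [Field K]
    {n m k r : ℕ} (c : Fin r → Fin n → ℝ)
    (hnonneg : ∀ i j, 0 ≤ c i j)
    (f : Fin k → MvPowerSeries (Fin n ⊕ Fin m) K)
    (α : Fin k → (Fin n →₀ ℕ))
    (hexp : ∀ i : Fin k,
      MvPowerSeries.coeff (inclU (α i)) (f i) ≠ 0 ∧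
      ∀ b : Fin n →₀ ℕ, MvPowerSeries.coeff (inclU b) (f i) ≠ 0 → b ≠ α i →
        toLex (tvec c (α i)) < toLex (tvec c b))
    (g : MvPowerSeries (Fin n ⊕ Fin m) K) :
    ∃! hr : (Fin k → MvPowerSeries (Fin n ⊕ Fin m) K) ×
        MvPowerSeries (Fin n ⊕ Fin m) K,
      (∀ i : Fin k, ∀ d, MvPowerSeries.coeff d (hr.1 i) ≠ 0 →
        projU d ∈ gammaI α i) ∧
      (∀ d, MvPowerSeries.coeff d hr.2 ≠ 0 → projU d ∈ gammaSet α) ∧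
      g = (∑ i, hr.1 i * f i) + hr.2 := by
  obtain ⟨x, hx, hx_unique⟩ := (wellFounded_divKey hnonneg).existsUnique_of_triangular _
    (coeff_sum_divQuotient_mul_add_divRemainder_triangular hexp) fun d => coeff d g
  obtain ⟨hq, hρ⟩ := hasDivisionSupport_divQuotient_divRemainder α x
  refine ⟨(divQuotient α x, divRemainder α x), ⟨hq, hρ, ext fun d => (hx d).symm⟩, ?_⟩
  rintro ⟨h, ρ⟩ ⟨hh, hρ', rfl⟩
  obtain ⟨y, rfl, rfl⟩ := HasDivisionSupport.exists_eq ⟨hh, hρ'⟩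
  rw [hx_unique y fun d => rfl]

/-- **Weierstrass–Hironaka formal division.**  Let `K` be a field and `T̄` a
total positive monomial order on `ℕ^n` (coefficient matrix `c`, nonnegative,
positive, injective on `ℕ^n`).  Let `f_1,…,f_k ∈ K[[u,v]]` be formal power
series whose initial exponents `α_i = exp_{T̄}(f_i(u,0))` exist.  Then for every
`g ∈ K[[u,v]]` there exist unique `h_i` and `r` with `supp(h_i) ⊆ Γ_i × ℕ^m`,
`supp(r) ⊆ Γ × ℕ^m` and `g = Σ h_i f_i + r`. -/
theorem weierstrass_hironaka_formal_division {K : Type*} [Field K]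
    {n m k r : ℕ} (c : Fin r → Fin n → ℝ)
    (hnonneg : ∀ i j, 0 ≤ c i j)
    (hpos : ∀ a : Fin n → ℕ, a ≠ 0 → ∃ i, 0 < ∑ j, c i j * (a j : ℝ))
    (htotal : Function.Injective fun a : Fin n →₀ ℕ => tvec c a)
    (f : Fin k → MvPowerSeries (Fin n ⊕ Fin m) K)
    (α : Fin k → (Fin n →₀ ℕ))
    (hexp : ∀ i : Fin k,
      MvPowerSeries.coeff (inclU (α i)) (f i) ≠ 0 ∧
      ∀ b : Fin n →₀ ℕ, MvPowerSeries.coeff (inclU b) (f i) ≠ 0 → b ≠ α i →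
        toLex (tvec c (α i)) < toLex (tvec c b))
    (g : MvPowerSeries (Fin n ⊕ Fin m) K) :
    ∃! hr : (Fin k → MvPowerSeries (Fin n ⊕ Fin m) K) ×
        MvPowerSeries (Fin n ⊕ Fin m) K,
      (∀ i : Fin k, ∀ d, MvPowerSeries.coeff d (hr.1 i) ≠ 0 →
        projU d ∈ gammaI α i) ∧
      (∀ d, MvPowerSeries.coeff d hr.2 ≠ 0 → projU d ∈ gammaSet α) ∧
      g = (∑ i, hr.1 i * f i) + hr.2 :=
  weierstrass_hironaka_formal_division_general c hnonneg f α hexp g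
end

section
/- The set of Hilbert-Samuel functions {H_I : I an ideal of K[x_1,…,x_n]}, where H_I(k) = dim_K K[x_1,…,x_n]/(I + m^{k+1}) and the functions ℕ → ℕ are ordered lexicographically, satisfies the descending chain condition: every decreasing sequence H_1 ≥ H_2 ≥ … stabilizes. -/
/-- The Hilbert–Samuel function of an ideal `I ⊆ K[x_1,…,x_n]`:
`H_I(k) = dim_K K[x_1,…,x_n]/(I + m^{k+1})`, with `m = (x_1,…,x_n)`. -/
noncomputable def hilbertSamuel {K : Type*} [Field K] {n : ℕ}
    (I : Ideal (MvPolynomial (Fin n) K)) (k : ℕ) : ℕ :=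
  Module.finrank K
    (MvPolynomial (Fin n) K ⧸
      (I ⊔ (Ideal.span (Set.range (MvPolynomial.X : Fin n →
        MvPolynomial (Fin n) K))) ^ (k + 1)))

/-- The lexicographic order on functions `ℕ → ℕ`:  `H ≤ H'` if they are equal,
or at the smallest argument where they differ, `H` is smaller. -/
def lexLE (H H' : ℕ → ℕ) : Prop :=
  H = H' ∨ ∃ k, H k < H' k ∧ ∀ j < k, H j = H' j


/-!
Write `Δ(I)` for the exponents of lowest terms, for the degree-lexicographic order, of the
elements of `I`. The standard monomials `x^a`, `a ∉ Δ(I)`, `|a| ≤ k`, form a basis of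
`K[x]/(I + m^{k+1})`: they are independent since, in a relation, the lowest term of the part lying
in `I` would be a standard monomial in `Δ(I)`, and they span since a monomial in `Δ(I)` can be
traded, modulo `I`, for larger ones.
So `H_I` counts the points of degree `≤ k` of the lower set `ℕⁿ \ Δ(I)`.

For these counting functions, let `E_m` be lower sets with strictly lex-decreasing functions and
`L` their limit along a non-principal ultrafilter. The function of `L` lies strictly below every
term, so each `E_m` has a point `b_m ∉ L`. By Dickson's lemma the `b_m` have finitely many minimal
elements; some `E_m` agrees with `L` on all of them, yet contains the minimal element below `b_m`.
-/

open Filter MvPolynomial MonomialOrder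

lemma Ultrafilter.eventually_inter_eq_limsup_inter {ι α : Type*} (U : Ultrafilter ι)
    (E : ι → Set α) {F : Set α} (hF : F.Finite) :
    ∀ᶠ i in (U : Filter ι), E i ∩ F = limsup E (U : Filter ι) ∩ F := by
  have hlim (a : α) : a ∈ limsup E (U : Filter ι) ↔ ∀ᶠ i in (U : Filter ι), a ∈ E i := by
    rw [mem_limsup_iff_frequently_mem, U.frequently_iff_eventually]
  have hpt : ∀ a ∈ F, ∀ᶠ i in (U : Filter ι), a ∈ E i ↔ a ∈ limsup E (U : Filter ι) := by
    intro a _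
    by_cases ha : ∀ᶠ i in (U : Filter ι), a ∈ E i
    · exact ha.mono fun i hi => iff_of_true hi ((hlim a).2 ha)
    · exact (U.eventually_not.2 ha).mono fun i hi => iff_of_false hi (mt (hlim a).1 ha)
  filter_upwards [(eventually_all_finite hF).2 hpt] with i hi
  ext a
  exact ⟨fun h => ⟨(hi a h.2).1 h.1, h.2⟩, fun h => ⟨(hi a h.2).2 h.1, h.2⟩⟩

lemma Set.IsWF.exists_eq_of_antitone {α : Type*} [PartialOrder α] {s : Set α} (hs : s.IsWF)
    {f : ℕ → α} (hf : Antitone f) (hfs : ∀ n, f n ∈ s) : ∃ N, ∀ n, N ≤ n → f n = f N := by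
  have : WellFoundedLT s := ⟨hs⟩
  obtain ⟨N, hN⟩ := WellFoundedLT.antitone_chain_condition (f := fun n => (⟨f n, hfs n⟩ : s))
    fun _ _ hab => hf hab
  exact ⟨N, fun n hn => congrArg Subtype.val (hN n hn).symm⟩

section DegreeCount

variable {σ : Type*}

noncomputable def degreeCount (E : Set (σ →₀ ℕ)) (k : ℕ) : ℕ :=
  (E ∩ {a | a.degree ≤ k}).ncard

lemma degreeCount_mono [Finite σ] {E F : Set (σ →₀ ℕ)} (h : E ⊆ F) :
    degreeCount E ≤ degreeCount F := fun k =>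
  Set.ncard_le_ncard (Set.inter_subset_inter_left _ h)
    ((Finsupp.finite_of_degree_le k).subset Set.inter_subset_right)

lemma degreeCount_eq_of_inter_eq {E F : Set (σ →₀ ℕ)} {k K : ℕ} (hk : k ≤ K)
    (h : E ∩ {a | a.degree ≤ K} = F ∩ {a | a.degree ≤ K}) :
    degreeCount E k = degreeCount F k := by
  have hsub : {a : σ →₀ ℕ | a.degree ≤ k} ⊆ {a | a.degree ≤ K} := fun _ ha => le_trans ha hk
  unfold degreeCount
  rw [← Set.inter_eq_right.2 hsub, ← Set.inter_assoc, h, Set.inter_assoc]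

lemma toLex_degreeCount_limsup_lt [Finite σ] {E : ℕ → Set (σ →₀ ℕ)}
    (hE : StrictAnti fun m => toLex (degreeCount (E m))) (m : ℕ) :
    toLex (degreeCount (limsup E (hyperfilter ℕ : Filter ℕ))) < toLex (degreeCount (E m)) := by
  set L := limsup E (hyperfilter ℕ : Filter ℕ)
  suffices hle : ∀ j, toLex (degreeCount L) ≤ toLex (degreeCount (E j)) from
    (hle (m + 1)).trans_lt (hE m.lt_succ_self)
  intro j
  by_contra! ⟨i, hbelow, hat⟩
  obtain ⟨j', hagree, hj'⟩ :=
    (((hyperfilter ℕ).eventually_inter_eq_limsup_inter E (Finsupp.finite_of_degree_le i)).and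
      (Nat.hyperfilter_le_atTop (eventually_gt_atTop j))).exists
  have heq (l : ℕ) (hl : l ≤ i) : degreeCount (E j') l = degreeCount L l :=
    degreeCount_eq_of_inter_eq hl hagree
  exact (hE hj').not_gt
    ⟨i, fun l hl => (hbelow l hl).trans (heq l hl.le).symm, hat.trans_eq (heq i le_rfl).symm⟩

theorem not_strictAnti_toLex_degreeCount [Finite σ] (E : ℕ → Set (σ →₀ ℕ))
    (hE : ∀ m, IsLowerSet (E m)) : ¬StrictAnti fun m => toLex (degreeCount (E m)) := by
  intro hanti
  set L := limsup E (hyperfilter ℕ : Filter ℕ)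
  have hnotsub (m : ℕ) : ∃ b ∈ E m, b ∉ L := Set.not_subset.1 fun hsub =>
    (toLex_degreeCount_limsup_lt hanti m).not_ge (Pi.toLex_monotone (degreeCount_mono hsub))
  choose b hbE hbL using hnotsub
  have hmin : {a | Minimal (· ∈ Set.range b) a}.Finite :=
    WellQuasiOrderedLE.finite_of_isAntichain (setOfPred_minimal_antichain _)
  obtain ⟨m, hagree⟩ := ((hyperfilter ℕ).eventually_inter_eq_limsup_inter E hmin).exists
  obtain ⟨a, hab, hamin⟩ := exists_minimal_le_of_wellFoundedLT (· ∈ Set.range b) (b m) ⟨m, rfl⟩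
  obtain ⟨m', rfl⟩ := hamin.prop
  have hbm' : b m' ∈ E m ∩ {a | Minimal (· ∈ Set.range b) a} := ⟨hE m hab (hbE m), hamin⟩
  exact hbL m' (hagree ▸ hbm').1

theorem isWF_range_toLex_degreeCount [Finite σ] :
    (Set.range fun E : LowerSet (σ →₀ ℕ) => toLex (degreeCount (E : Set (σ →₀ ℕ)))).IsWF := by
  refine Set.isWF_iff_no_descending_seq.2 fun f hf hmem => ?_
  choose E hE using hmem
  have hf' : StrictAnti fun m => toLex (degreeCount (E m : Set (σ →₀ ℕ))) := by
    simpa only [hE] using hf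
  exact not_strictAnti_toLex_degreeCount _ (fun m => (E m).lower) hf'

end DegreeCount

lemma MvPolynomial.mem_of_forall_monomial_one_mem {σ R : Type*} [CommSemiring R]
    {N : Submodule R (MvPolynomial σ R)} {p : MvPolynomial σ R}
    (h : ∀ β ∈ p.support, monomial β (1 : R) ∈ N) : p ∈ N := by
  have hp : p ∈ restrictSupport R (p.support : Set (σ →₀ ℕ)) :=
    (mem_restrictSupport_iff R).2 subset_rfl
  rw [restrictSupport_eq_span] at hp
  exact Submodule.span_le.2 (Set.image_subset_iff.2 h) hp

namespace MonomialOrder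

variable {σ : Type*} {m : MonomialOrder σ}

section CommSemiring

variable {R : Type*} [CommSemiring R]

variable (m) in
/- Lowest rather than leading terms, so that adding `idealOfVars σ R ^ (k + 1)` to `I` does not
change the diagram in degrees `≤ k`. -/
def lowestExponents (I : Ideal (MvPolynomial σ R)) : Set (σ →₀ ℕ) :=
  {a | ∃ f ∈ I, a ∈ f.support ∧ ∀ b ∈ f.support, a ≼[m] b}

variable (m) in
def standardExponents (I : Ideal (MvPolynomial σ R)) (k : ℕ) : Set (σ →₀ ℕ) :=
  (m.lowestExponents I)ᶜ ∩ {a | a.degree ≤ k}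

lemma isUpperSet_lowestExponents (I : Ideal (MvPolynomial σ R)) :
    IsUpperSet (m.lowestExponents I) := by
  rintro a b hab ⟨f, hfI, haf, hmin⟩
  obtain ⟨c, rfl⟩ := le_iff_exists_add'.1 hab
  refine ⟨monomial c 1 * f, I.mul_mem_left _ hfI, ?_, fun β hβ => ?_⟩
  · rwa [mem_support_iff, coeff_monomial_mul, one_mul, ← mem_support_iff]
  · rw [mem_support_iff, coeff_monomial_mul'] at hβ
    split_ifs at hβ with hcβ
    · rw [one_mul, ← mem_support_iff] at hβ
      have := add_le_add_left (hmin _ hβ) (m.toSyn c)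
      rwa [← map_add, ← map_add, tsub_add_cancel_of_le hcβ, add_comm] at this
    · exact absurd rfl hβ

theorem eq_zero_of_mem_restrictSupport_standardExponents
    (hm : ∀ a b : σ →₀ ℕ, a ≼[m] b → a.degree ≤ b.degree)
    {I : Ideal (MvPolynomial σ R)} {k : ℕ} {p : MvPolynomial σ R}
    (hp : p ∈ restrictSupport R (m.standardExponents I k))
    (hpI : p ∈ I ⊔ idealOfVars σ R ^ (k + 1)) : p = 0 := by
  obtain ⟨y, hy, z, hz, rfl⟩ := Submodule.mem_sup.1 hpI
  suffices hy' : y ∈ idealOfVars σ R ^ (k + 1) by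
    have hyz := (mem_pow_idealOfVars_iff _ _).1 (add_mem hy' hz)
    refine support_eq_empty.1 (Finset.eq_empty_of_forall_notMem fun a ha => ?_)
    exact Nat.not_succ_le_self k ((hyz a ha).trans (hp ha).2)
  refine (mem_pow_idealOfVars_iff _ _).2 fun β hβ => ?_
  by_contra! hβk
  obtain ⟨a, ha, hamin⟩ := y.support.exists_min_image m.toSyn ⟨β, hβ⟩
  have hak : a.degree < k + 1 := (hm a β (hamin β hβ)).trans_lt hβk
  have hza : z.coeff a = 0 := (mem_pow_idealOfVars_iff' _ _).1 hz a hak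
  have hayz : a ∈ (y + z).support := by
    rwa [mem_support_iff, coeff_add, hza, add_zero, ← mem_support_iff]
  exact (hp hayz).1 ⟨y, hy, ha, hamin⟩

end CommSemiring

variable {K : Type*} [Field K]

theorem monomial_mem_restrictSupport_standardExponents_sup [Finite σ]
    (I : Ideal (MvPolynomial σ K)) (k : ℕ) (γ : σ →₀ ℕ) :
    monomial γ (1 : K) ∈ restrictSupport K (m.standardExponents I k) ⊔
      (I ⊔ idealOfVars σ K ^ (k + 1)).restrictScalars K := by
  set N := restrictSupport K (m.standardExponents I k) ⊔
    (I ⊔ idealOfVars σ K ^ (k + 1)).restrictScalars K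
  have hhigh (β : σ →₀ ℕ) (hβ : k < β.degree) : monomial β (1 : K) ∈ N :=
    Submodule.mem_sup_right <| Ideal.mem_sup_right <|
      (monomial_mem_pow_idealOfVars_iff _ _ one_ne_zero).2 hβ
  rcases lt_or_ge k γ.degree with hγ | hγ
  · exact hhigh γ hγ
  have hwf : {a : σ →₀ ℕ | a.degree ≤ k}.WellFoundedOn fun a b => b ≺[m] a :=
    Set.wellFoundedOn_image.1 (((Finsupp.finite_of_degree_le k).image m.toSyn).wellFoundedOn
      (r := (· > ·)))
  refine hwf.induction (P := fun γ => monomial γ (1 : K) ∈ N) hγ fun γ hγ ih => ?_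
  by_cases hΔ : γ ∈ m.lowestExponents I
  swap
  · exact Submodule.mem_sup_left ((monomial_mem_restrictSupport K).2 (Or.inl ⟨hΔ, hγ⟩))
  obtain ⟨g, hgI, hγg, hgmin⟩ := hΔ
  have habove (β : σ →₀ ℕ) (hβ : γ ≺[m] β) : monomial β (1 : K) ∈ N := by
    rcases lt_or_ge k β.degree with hβk | hβk
    · exact hhigh β hβk
    · exact ih β hβk hβ
  set c := g.coeff γ
  have hc : c ≠ 0 := mem_support_iff.1 hγg
  have htail : c⁻¹ • g - monomial γ 1 ∈ N := by
    classical
    refine mem_of_forall_monomial_one_mem fun β hβ => habove β ?_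
    rw [mem_support_iff, coeff_sub, coeff_smul, coeff_monomial, smul_eq_mul] at hβ
    have hβγ : γ ≠ β := by rintro rfl; simp [c, hc] at hβ
    rw [if_neg hβγ, sub_zero] at hβ
    exact (hgmin β (mem_support_iff.2 (right_ne_zero_of_mul hβ))).lt_of_ne
      (m.toSyn.injective.ne hβγ)
  have hg : c⁻¹ • g ∈ N :=
    Submodule.mem_sup_right (Submodule.smul_of_tower_mem _ _ (Ideal.mem_sup_left hgI))
  simpa using sub_mem hg htail

theorem isCompl_restrictSupport_standardExponents [Finite σ]
    (hm : ∀ a b : σ →₀ ℕ, a ≼[m] b → a.degree ≤ b.degree) (I : Ideal (MvPolynomial σ K))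
    (k : ℕ) :
    IsCompl ((I ⊔ idealOfVars σ K ^ (k + 1)).restrictScalars K)
      (restrictSupport K (m.standardExponents I k)) := by
  refine ⟨Submodule.disjoint_def.2 fun p hpI hp =>
    eq_zero_of_mem_restrictSupport_standardExponents hm hp hpI, ?_⟩
  rw [codisjoint_iff, sup_comm, eq_top_iff]
  exact fun p _ => mem_of_forall_monomial_one_mem fun γ _ =>
    monomial_mem_restrictSupport_standardExponents_sup I k γ

theorem finrank_quotient_sup_pow_idealOfVars [Finite σ]
    (hm : ∀ a b : σ →₀ ℕ, a ≼[m] b → a.degree ≤ b.degree) (I : Ideal (MvPolynomial σ K))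
    (k : ℕ) :
    Module.finrank K (MvPolynomial σ K ⧸ (I ⊔ idealOfVars σ K ^ (k + 1))) =
      (m.standardExponents I k).ncard := by
  rw [← (Submodule.Quotient.restrictScalarsEquiv K _).finrank_eq,
    (Submodule.quotientEquivOfIsCompl _ _
      (isCompl_restrictSupport_standardExponents hm I k)).finrank_eq,
    Module.finrank_eq_nat_card_basis (basisRestrictSupport K _), Nat.card_coe_set_eq]

end MonomialOrder

theorem hilbertSamuel_eq_degreeCount {K : Type*} [Field K] {n : ℕ}
    (I : Ideal (MvPolynomial (Fin n) K)) :
    hilbertSamuel I = degreeCount (degLex.lowestExponents I)ᶜ :=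
  funext <| finrank_quotient_sup_pow_idealOfVars (fun _ _ h => Finsupp.DegLex.monotone_degree h) I

theorem isWF_range_toLex_hilbertSamuel {K : Type*} [Field K] {n : ℕ} :
    (Set.range fun I : Ideal (MvPolynomial (Fin n) K) => toLex (hilbertSamuel I)).IsWF :=
  isWF_range_toLex_degreeCount.mono <| by
    rintro _ ⟨I, rfl⟩
    exact ⟨⟨_, (isUpperSet_lowestExponents (m := degLex) I).compl⟩,
      congrArg toLex (hilbertSamuel_eq_degreeCount I).symm⟩

lemma lexLE_iff_toLex_le (H H' : ℕ → ℕ) : lexLE H H' ↔ toLex H ≤ toLex H' := by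
  rw [lexLE, le_iff_eq_or_lt, toLex_inj]
  exact or_congr_right (exists_congr fun _ => and_comm)

/-- **Descending chain condition for Hilbert–Samuel functions.**  Any sequence
of ideals of `K[x_1,…,x_n]` whose Hilbert–Samuel functions are decreasing in
the lexicographic order has eventually constant Hilbert–Samuel function. -/
theorem hilbertSamuel_dcc {K : Type*} [Field K] {n : ℕ}
    (I : ℕ → Ideal (MvPolynomial (Fin n) K))
    (hdec : ∀ m : ℕ, lexLE (hilbertSamuel (I (m + 1))) (hilbertSamuel (I m))) :
    ∃ N : ℕ, ∀ m : ℕ, N ≤ m → hilbertSamuel (I m) = hilbertSamuel (I N) := by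
  obtain ⟨N, hN⟩ := isWF_range_toLex_hilbertSamuel.exists_eq_of_antitone
    (antitone_nat_of_succ_le fun m => (lexLE_iff_toLex_le _ _).1 (hdec m)) fun m => ⟨I m, rfl⟩
  exact ⟨N, fun m hm => toLex_inj.1 (hN m hm)⟩
end

section
/- Stabilization theorem for graded modules: Let K be a commutative ring with 1, R = K[x_1,…,x_n] with the subring chain R_0 = K ⊆ R_1 = K[x_n] ⊆ … ⊆ R_n = R, and let M = ⊕_s M_s be a finite graded R-module generated over (R_i)_{i=0}^n by homogeneous elements g_{ij} of degrees d_{ij} (i.e., M = Σ_{i,j} R_i · g_{ij}). Let d(M) = max d_{ij}. If s_{ij} ∈ M are homogeneous elements with deg(s_{ij}) = d_{ij} such that the sums Σ_{i,j} (R_i)_{≤ s - d_{ij}} s_{ij} generate all graded pieces M_s for s ≤ d(M)+1, then the s_{ij} generate M over (R_i)_{i=0}^n. -/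
open MvPolynomial

/-- `p ∈ K[x_1,…,x_n]` lies in the subring `R_i = K[x_{n-i+1},…,x_n]` of
polynomials in the last `i` variables. -/
def InLast {K : Type*} [CommSemiring K] {n : ℕ} (i : ℕ)
    (p : MvPolynomial (Fin n) K) : Prop :=
  ∀ d ∈ p.support, ∀ j : Fin n, (j : ℕ) < n - i → d j = 0

private lemma inLast_monomial_of {K : Type*} [CommSemiring K] {n : ℕ} {i : ℕ}
    (d : Fin n →₀ ℕ) (a : K) (h : ∀ j : Fin n, (j : ℕ) < n - i → d j = 0) :
    InLast i (monomial d a) := by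
  intro e he j hj
  have : e = d := Finset.mem_singleton.1 (MvPolynomial.support_monomial_subset he)
  subst this
  exact h j hj

/-- The `K`-span of elements `c • s j` with `c` in the last `lvl j` variables. -/
private def chainSpan {K : Type*} [CommRing K] {n N : ℕ}
    {M : Type*} [AddCommGroup M] [Module K M]
    [Module (MvPolynomial (Fin n) K) M]
    [IsScalarTower K (MvPolynomial (Fin n) K) M]
    (lvl : Fin N → ℕ) (s : Fin N → M) : Submodule K M where
  carrier := {m | ∃ c : Fin N → MvPolynomial (Fin n) K,
    (∀ j, InLast (lvl j) (c j)) ∧ m = ∑ j, c j • s j}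
  add_mem' := by
    rintro a b ⟨ca, hca, rfl⟩ ⟨cb, hcb, rfl⟩
    refine ⟨fun j => ca j + cb j, fun j d hd j' hj' => ?_, ?_⟩
    · rcases Finset.mem_union.1 (MvPolynomial.support_add hd) with h | h
      exacts [hca j d h j' hj', hcb j d h j' hj']
    · simp [add_smul, Finset.sum_add_distrib]
  zero_mem' := ⟨0, fun j d hd => by simp at hd, by simp⟩
  smul_mem' := by
    rintro t a ⟨c, hc, rfl⟩
    refine ⟨fun j => t • c j, fun j d hd => hc j d (MvPolynomial.support_smul hd), ?_⟩
    rw [Finset.smul_sum]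
    exact Finset.sum_congr rfl fun j _ => (smul_assoc t (c j) (s j)).symm

private lemma mem_chainSpan_iff {K : Type*} [CommRing K] {n N : ℕ}
    {M : Type*} [AddCommGroup M] [Module K M]
    [Module (MvPolynomial (Fin n) K) M]
    [IsScalarTower K (MvPolynomial (Fin n) K) M]
    (lvl : Fin N → ℕ) (s : Fin N → M) (m : M) :
    m ∈ chainSpan (K := K) (n := n) lvl s ↔ ∃ c : Fin N → MvPolynomial (Fin n) K,
      (∀ j, InLast (lvl j) (c j)) ∧ m = ∑ j, c j • s j := Iff.rfl

private lemma chainSpan_single_mem {K : Type*} [CommRing K] {n N : ℕ}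
    {M : Type*} [AddCommGroup M] [Module K M]
    [Module (MvPolynomial (Fin n) K) M]
    [IsScalarTower K (MvPolynomial (Fin n) K) M]
    (lvl : Fin N → ℕ) (s : Fin N → M) (p : MvPolynomial (Fin n) K) (k : Fin N)
    (hp : InLast (lvl k) p) : p • s k ∈ chainSpan (K := K) (n := n) lvl s := by
  classical
  refine ⟨fun j => if j = k then p else 0, fun j => ?_, ?_⟩
  · show InLast (lvl j) (if j = k then p else 0)
    split
    · subst ‹j = k›; exact hp
    · intro d hd; simp at hd
  · have h : ∀ j : Fin N, (if j = k then p else 0) • s j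
        = if j = k then p • s k else 0 := by
      intro j; split
      · subst ‹j = k›; rfl
      · simp
    rw [Finset.sum_congr rfl fun j _ => h j, Finset.sum_ite_eq' Finset.univ k]
    simp

/-- **Stabilization theorem for graded modules.**  Let `K` be a commutative
ring, `R = K[x_1,…,x_n]`, and `M = ⊕_s M_s` a finite graded `R`-module
generated over the chain `(R_i)_{i=0}^n` by homogeneous elements `g_j` of
degrees `deg j`, the generators attached to level `lvl j` being multiplied only
by polynomials in the last `lvl j` variables.  Let `d(M) = max deg`.  If
`s_j ∈ M_{deg j}` are homogeneous of the same degrees and the sums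
`Σ_j (R_{lvl j})_{≤ σ - deg j} · s_j` generate every graded piece `M_σ` for
`σ ≤ d(M) + 1`, then the `s_j` generate `M` over `(R_i)_{i=0}^n`. -/
theorem stabilization_for_modules {K : Type*} [CommRing K] {n N : ℕ}
    {M : Type*} [AddCommGroup M] [Module K M]
    [Module (MvPolynomial (Fin n) K) M]
    [IsScalarTower K (MvPolynomial (Fin n) K) M]
    (ℳ : ℕ → Submodule K M) [DirectSum.Decomposition ℳ]
    (hgr : ∀ (d : Fin n →₀ ℕ) (σ : ℕ), ∀ m ∈ ℳ σ,
      (monomial d (1 : K) : MvPolynomial (Fin n) K) • m ∈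
        ℳ (σ + d.sum fun _ e => e))
    (lvl : Fin N → ℕ) (hlvl : ∀ j, lvl j ≤ n)
    (deg : Fin N → ℕ)
    (g : Fin N → M) (hg : ∀ j, g j ∈ ℳ (deg j))
    (hgen : ∀ m : M, ∃ c : Fin N → MvPolynomial (Fin n) K,
      (∀ j, InLast (lvl j) (c j)) ∧ m = ∑ j, c j • g j)
    (s : Fin N → M) (hs : ∀ j, s j ∈ ℳ (deg j))
    (hsgen : ∀ σ : ℕ, σ ≤ (Finset.univ.sup deg) + 1 → ∀ m ∈ ℳ σ,
      ∃ c : Fin N → MvPolynomial (Fin n) K,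
        (∀ j, InLast (lvl j) (c j) ∧ (c j).totalDegree ≤ σ - deg j ∧
          (σ < deg j → c j = 0)) ∧
        m = ∑ j, c j • s j) :
    ∀ m : M, ∃ c : Fin N → MvPolynomial (Fin n) K,
      (∀ j, InLast (lvl j) (c j)) ∧ m = ∑ j, c j • s j := by
  classical
  set D := Finset.univ.sup deg with hD
  set NS := chainSpan (K := K) (n := n) lvl s with hNS
  have Ndirect : ∀ (p : MvPolynomial (Fin n) K) (k : Fin N),
      InLast (lvl k) p → p • s k ∈ NS := fun p k hp => chainSpan_single_mem lvl s p k hp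
  -- Key lemma: for ANY monomial `π`, `monomial π 1 • s k ∈ NS`.
  have key : ∀ (B F : ℕ) (π : Fin n →₀ ℕ) (k : Fin N),
      (π.sum fun _ e => e) + deg k ≤ B →
      (π.sum fun w e => e * (B + 2) ^ (n - (w : ℕ))) ≤ F →
      (monomial π (1 : K) : MvPolynomial (Fin n) K) • s k ∈ NS := by
    intro B F
    induction F with
    | zero =>
      intro π k hB hw
      by_cases hGood : ∀ w : Fin n, (w : ℕ) < n - lvl k → π w = 0
      · exact Ndirect _ _ (inLast_monomial_of _ _ hGood)
      · exfalso
        push_neg at hGood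
        obtain ⟨w, hw1, hw2⟩ := hGood
        have hmem : w ∈ π.support := Finsupp.mem_support_iff.2 hw2
        have h1 : π w * (B + 2) ^ (n - (w : ℕ))
            ≤ π.sum fun u e => e * (B + 2) ^ (n - (u : ℕ)) := by
          have := Finset.single_le_sum
            (f := fun u : Fin n => π u * (B + 2) ^ (n - (u : ℕ)))
            (fun i _ => Nat.zero_le _) hmem
          simpa [Finsupp.sum] using this
        have h2 : 0 < π w * (B + 2) ^ (n - (w : ℕ)) :=
          Nat.mul_pos (Nat.pos_of_ne_zero hw2) (pow_pos (by omega) _)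
        omega
    | succ F ih =>
      intro π k hB hw
      by_cases hGood : ∀ w : Fin n, (w : ℕ) < n - lvl k → π w = 0
      · exact Ndirect _ _ (inLast_monomial_of _ _ hGood)
      · push_neg at hGood
        obtain ⟨w0, hw01, hw02⟩ := hGood
        have hne : π.support.Nonempty := ⟨w0, Finsupp.mem_support_iff.2 hw02⟩
        set v := π.support.min' hne with hv
        have hvmem : v ∈ π.support := π.support.min'_mem hne
        have hvmin : ∀ u ∈ π.support, v ≤ u := fun u hu => π.support.min'_le u hu
        have hvlt : (v : ℕ) < n - lvl k :=
          lt_of_le_of_lt (hvmin w0 (Finsupp.mem_support_iff.2 hw02)) hw01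
        have hvn : (v : ℕ) < n := v.isLt
        set π₂ := π - Finsupp.single v 1 with hπ₂
        have hle : Finsupp.single v 1 ≤ π :=
          Finsupp.single_le_iff.2 (Nat.one_le_iff_ne_zero.2 (Finsupp.mem_support_iff.1 hvmem))
        have hππ : π₂ + Finsupp.single v 1 = π := tsub_add_cancel_of_le hle
        have hπ₂small : ∀ u : Fin n, (u : ℕ) < (v : ℕ) → π₂ u = 0 := by
          intro u hu
          have hπu : π u = 0 := by
            by_contra h
            have : v ≤ u := hvmin u (Finsupp.mem_support_iff.2 h)
            have : (v : ℕ) ≤ (u : ℕ) := this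
            omega
          have : π₂ u ≤ π u := by
            rw [hπ₂, Finsupp.tsub_apply]; omega
          omega
        -- x_v • s k lies in ℳ (deg k + 1)
        have hsum1 : ((Finsupp.single v 1).sum fun _ e => e) = 1 :=
          Finsupp.sum_single_index rfl
        have hmem1 : (monomial (Finsupp.single v 1) (1 : K) : MvPolynomial (Fin n) K) • s k
            ∈ ℳ (deg k + 1) := by
          have h := hgr (Finsupp.single v 1) (deg k) (s k) (hs k)
          rwa [hsum1] at h
        have hdk : deg k ≤ D := Finset.le_sup (Finset.mem_univ k)
        obtain ⟨c', hc', hrep⟩ := hsgen (deg k + 1) (by omega) _ hmem1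
        have hmain : (monomial π (1 : K) : MvPolynomial (Fin n) K) • s k
            = ∑ m, ((monomial π₂ (1 : K) : MvPolynomial (Fin n) K) * c' m) • s m := by
          calc (monomial π (1 : K) : MvPolynomial (Fin n) K) • s k
              = ((monomial π₂ (1 : K) : MvPolynomial (Fin n) K)
                  * monomial (Finsupp.single v 1) 1) • s k := by
                rw [monomial_mul, one_mul, hππ]
            _ = (monomial π₂ (1 : K) : MvPolynomial (Fin n) K) •
                  ((monomial (Finsupp.single v 1) (1 : K) : MvPolynomial (Fin n) K) • s k) := by
                rw [← smul_smul]
            _ = ∑ m, ((monomial π₂ (1 : K) : MvPolynomial (Fin n) K) * c' m) • s m := by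
                rw [hrep, Finset.smul_sum]
                exact Finset.sum_congr rfl fun m _ => smul_smul _ _ _
        rw [hmain]
        refine Submodule.sum_mem _ fun m _ => ?_
        obtain ⟨hIL, hdegb, hzero⟩ := hc' m
        by_cases hc0 : c' m = 0
        · simp [hc0]
        have hdm : deg m ≤ deg k + 1 := by
          by_contra hcon
          exact hc0 (hzero (by omega))
        have hexp : ((monomial π₂ (1 : K) : MvPolynomial (Fin n) K) * c' m) • s m
            = ∑ l ∈ (c' m).support, (coeff l (c' m)) •
                ((monomial (π₂ + l) (1 : K) : MvPolynomial (Fin n) K) • s m) := by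
          conv_lhs => rw [(c' m).as_sum]
          rw [Finset.mul_sum, Finset.sum_smul]
          refine Finset.sum_congr rfl fun l hl => ?_
          rw [monomial_mul, one_mul, ← smul_assoc, smul_monomial, smul_eq_mul, mul_one]
        rw [hexp]
        refine Submodule.sum_mem _ fun l hl => Submodule.smul_mem _ _ ?_
        have hl0 : ∀ u : Fin n, (u : ℕ) < n - lvl m → l u = 0 := fun u hu => hIL l hl u hu
        have hlsum : (l.sum fun _ e => e) ≤ deg k + 1 - deg m :=
          le_trans (MvPolynomial.le_totalDegree hl) hdegb
        by_cases hcase : n - lvl m ≤ (v : ℕ)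
        · -- terminal case: everything is in the allowed variables for `m`
          refine Ndirect _ _ (inLast_monomial_of _ _ ?_)
          intro u hu
          have hu2 : (u : ℕ) < (v : ℕ) := lt_of_lt_of_le hu hcase
          have h1 : π₂ u = 0 := hπ₂small u hu2
          have h2 : l u = 0 := hl0 u hu
          simp [Finsupp.add_apply, h1, h2]
        · -- recursive case
          have hvlt2 : (v : ℕ) < n - lvl m := by omega
          -- sums
          have hsum_add : ((π₂ + l).sum fun _ e => e)
              = (π₂.sum fun _ e => e) + (l.sum fun _ e => e) :=
            Finsupp.sum_add_index' (fun _ => rfl) (fun _ _ _ => rfl)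
          have hπsum : (π.sum fun _ e => e) = (π₂.sum fun _ e => e) + 1 := by
            rw [← hππ, Finsupp.sum_add_index' (fun _ => rfl) (fun _ _ _ => rfl), hsum1]
          -- weights
          have hwadd : ((π₂ + l).sum fun w e => e * (B + 2) ^ (n - (w : ℕ)))
              = (π₂.sum fun w e => e * (B + 2) ^ (n - (w : ℕ)))
                + (l.sum fun w e => e * (B + 2) ^ (n - (w : ℕ))) :=
            Finsupp.sum_add_index' (fun _ => zero_mul _) (fun _ _ _ => add_mul _ _ _)
          have hwadd2 : ((π₂ + Finsupp.single v 1).sum fun w e => e * (B + 2) ^ (n - (w : ℕ)))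
              = (π₂.sum fun w e => e * (B + 2) ^ (n - (w : ℕ)))
                + ((Finsupp.single v 1).sum fun w e => e * (B + 2) ^ (n - (w : ℕ))) :=
            Finsupp.sum_add_index' (fun _ => zero_mul _) (fun _ _ _ => add_mul _ _ _)
          have hws : ((Finsupp.single v 1).sum fun w e => e * (B + 2) ^ (n - (w : ℕ)))
              = (B + 2) ^ (n - (v : ℕ)) := by
            rw [Finsupp.sum_single_index (h := fun (w : Fin n) e => e * (B + 2) ^ (n - (w : ℕ)))
              (zero_mul _), one_mul]
          have hwπ : (π.sum fun w e => e * (B + 2) ^ (n - (w : ℕ)))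
              = (π₂.sum fun w e => e * (B + 2) ^ (n - (w : ℕ)))
                + (B + 2) ^ (n - (v : ℕ)) := by
            conv_lhs => rw [← hππ]
            rw [hwadd2, hws]
          have hwl : (l.sum fun w e => e * (B + 2) ^ (n - (w : ℕ)))
              ≤ (l.sum fun _ e => e) * (B + 2) ^ (n - (v : ℕ) - 1) := by
            rw [Finsupp.sum, Finsupp.sum, Finset.sum_mul]
            refine Finset.sum_le_sum fun u hu => ?_
            have hune : l u ≠ 0 := Finsupp.mem_support_iff.1 hu
            have hularge : n - lvl m ≤ (u : ℕ) := by
              by_contra h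
              exact hune (hl0 u (by omega))
            have hexpo : n - (u : ℕ) ≤ n - (v : ℕ) - 1 := by omega
            exact Nat.mul_le_mul_left _ (Nat.pow_le_pow_right (by omega) hexpo)
          have hlB : (l.sum fun _ e => e) ≤ B + 1 := by omega
          have hmono : (l.sum fun _ e => e) * (B + 2) ^ (n - (v : ℕ) - 1)
              ≤ (B + 1) * (B + 2) ^ (n - (v : ℕ) - 1) := Nat.mul_le_mul_right _ hlB
          have hpow : (B + 1) * (B + 2) ^ (n - (v : ℕ) - 1) < (B + 2) ^ (n - (v : ℕ)) := by
            have h1 : (n - (v : ℕ) - 1) + 1 = n - (v : ℕ) := by omega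
            calc (B + 1) * (B + 2) ^ (n - (v : ℕ) - 1)
                < (B + 2) * (B + 2) ^ (n - (v : ℕ) - 1) :=
                  (Nat.mul_lt_mul_right (pow_pos (by omega) _)).2 (by omega)
              _ = (B + 2) ^ (n - (v : ℕ)) := by rw [← pow_succ', h1]
          refine ih (π₂ + l) m ?_ ?_
          · omega
          · omega
  -- every `q • s k` is in NS
  have qmem : ∀ (q : MvPolynomial (Fin n) K) (k : Fin N), q • s k ∈ NS := by
    intro q k
    have hq : q • s k = ∑ d ∈ q.support, (coeff d q) •
        ((monomial d (1 : K) : MvPolynomial (Fin n) K) • s k) := by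
      conv_lhs => rw [q.as_sum]
      rw [Finset.sum_smul]
      refine Finset.sum_congr rfl fun d hd => ?_
      rw [← smul_assoc, smul_monomial, smul_eq_mul, mul_one]
    rw [hq]
    refine Submodule.sum_mem _ fun d _ => Submodule.smul_mem _ _ ?_
    exact key ((d.sum fun _ e => e) + deg k) (d.sum fun w e => e * ((d.sum fun _ e => e) + deg k + 2) ^ (n - (w : ℕ))) d k le_rfl le_rfl
  -- every `p • g j` is in NS
  have gmem : ∀ (p : MvPolynomial (Fin n) K) (j : Fin N), p • g j ∈ NS := by
    intro p j
    have hdj : deg j ≤ D := Finset.le_sup (Finset.mem_univ j)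
    obtain ⟨c'', hc'', hgrep⟩ := hsgen (deg j) (by omega) (g j) (hg j)
    rw [hgrep, Finset.smul_sum]
    refine Submodule.sum_mem _ fun k _ => ?_
    rw [smul_smul]
    exact qmem _ _
  intro m
  obtain ⟨c, hc, hm⟩ := hgen m
  have : m ∈ NS := by
    rw [hm]
    exact Submodule.sum_mem _ fun j _ => gmem (c j) j
  exact this
end

section
/- Lifting a Stanley basis to extra variables: Let R_{n+m} = K[x_1,…,x_n, y_1,…,y_m] with its standard grading, and let b_{11},…,b_{n,k_n} ∈ R_{n+m} be homogeneous elements such that deg(b_{ij}) = deg(b_{ij}(x,0)). If the specializations b_{ij}(x,0) ∈ K[x] form a basis of R_{n+m} over (R_{i+m})_{i=0}^n, then the b_{ij} themselves form a basis of R_{n+m} over (R_{i+m})_{i=0}^n. -/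
open MvPolynomial

/-- In `K[x_1,…,x_n,y_1,…,y_m]` (variables indexed by `Fin (n+m)`, the first
`n` being the `x`'s), `p` lies in the subring
`R_{i+m} = K[x_{n-i+1},…,x_n,y_1,…,y_m]` iff every exponent occurring in `p`
vanishes on the variables of index `< n - i`. -/
def InLastXY {K : Type*} [CommSemiring K] {n m : ℕ} (i : ℕ)
    (p : MvPolynomial (Fin (n + m)) K) : Prop :=
  ∀ d ∈ p.support, ∀ j : Fin (n + m), (j : ℕ) < n - i → d j = 0

/-- The substitution `y = 0`: the `K`-algebra endomorphism of
`K[x_1,…,x_n,y_1,…,y_m]` sending each `x_j` to itself and each `y_j` to `0`. -/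
noncomputable def evalY0 (K : Type*) [CommRing K] (n m : ℕ) :
    MvPolynomial (Fin (n + m)) K →ₐ[K] MvPolynomial (Fin (n + m)) K :=
  aeval (fun j : Fin (n + m) => if (j : ℕ) < n then X j else 0)

/-! Grade `K[x, y]` by `y`-degree. Since `b_j(x,0)` is the `y`-degree-`0` component of `b_j`, the
lowest `y`-degree component of a relation `∑ c_j b_j = 0` is a relation `∑ c_j' b_j(x,0) = 0`,
so the coefficients vanish degree by degree. For generation grade by `x`-degree instead: as `b_j`
is homogeneous, `b_j(x,0)` is its top `x`-degree component, so a polynomial of `x`-degree `a`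
differs from a combination of the `b_j` by terms of `x`-degree `< a`. Both arguments only need
the coefficient rings `K[x_i : i ∈ s]` to be stable under taking weighted components. -/

open Function
open Finsupp (weight weight_apply degree_eq_weight_one)

namespace MvPolynomial

variable {σ R : Type*} [CommRing R]

theorem support_sub_weightedHomogeneousComponent {M : Type*} [AddCommMonoid M] [DecidableEq M]
    (w : σ → M) (a : M) (p : MvPolynomial σ R) :
    (p - weightedHomogeneousComponent w a p).support = {d ∈ p.support | weight w d ≠ a} := by
  ext d
  by_cases h : weight w d = a <;> simp [coeff_weightedHomogeneousComponent, h]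

theorem exists_weight_eq_add_of_mem_support_mul {M : Type*} [AddCommMonoid M] (w : σ → M)
    {p q : MvPolynomial σ R} {d : σ →₀ ℕ} (hd : d ∈ (p * q).support) :
    ∃ d₁ ∈ p.support, ∃ d₂ ∈ q.support, weight w d = weight w d₁ + weight w d₂ := by
  classical
  obtain ⟨d₁, h₁, d₂, h₂, rfl⟩ := Finset.mem_add.mp (support_mul p q hd)
  exact ⟨d₁, h₁, d₂, h₂, map_add _ _ _⟩

theorem weightedHomogeneousComponent_add_mul {M : Type*} [AddCancelCommMonoid M]
    {w : σ → M} {e : M} {β : MvPolynomial σ R} (hβ : β.IsWeightedHomogeneous w e)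
    (c : MvPolynomial σ R) (k : M) :
    weightedHomogeneousComponent w (k + e) (c * β) = weightedHomogeneousComponent w k c * β := by
  induction c using MvPolynomial.induction_on' with
  | monomial d r =>
    have hd := isWeightedHomogeneous_monomial w d r rfl
    by_cases hk : weight w d = k
    · subst hk
      rw [weightedHomogeneousComponent_eq_self (hd.mul hβ), weightedHomogeneousComponent_eq_self hd]
    · rw [IsWeightedHomogeneous.weightedHomogeneousComponent_ne _ (hd.mul hβ)
          (by simpa using Ne.symm hk),
        IsWeightedHomogeneous.weightedHomogeneousComponent_ne _ hd (Ne.symm hk), zero_mul]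
  | add p q hp hq => rw [add_mul, map_add, map_add, add_mul, hp, hq]

theorem weightedHomogeneousComponent_mul_of_le_weight {w : σ → ℕ} {t : ℕ}
    {a : MvPolynomial σ R} (ha : ∀ d ∈ a.support, t ≤ weight w d) (b : MvPolynomial σ R) :
    weightedHomogeneousComponent w t (a * b) =
      weightedHomogeneousComponent w t a * weightedHomogeneousComponent w 0 b := by
  have hhigh :
      weightedHomogeneousComponent w t (a * (b - weightedHomogeneousComponent w 0 b)) = 0 := by
    refine weightedHomogeneousComponent_eq_zero' _ _ fun d hd => ?_
    obtain ⟨d₁, h₁, d₂, h₂, hw⟩ := exists_weight_eq_add_of_mem_support_mul w hd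
    rw [support_sub_weightedHomogeneousComponent, Finset.mem_filter] at h₂
    have := ha d₁ h₁
    omega
  have hlow := weightedHomogeneousComponent_add_mul
    (weightedHomogeneousComponent_isWeightedHomogeneous (w := w) 0 b) a t
  rw [add_zero] at hlow
  rw [show a * b = a * weightedHomogeneousComponent w 0 b +
      a * (b - weightedHomogeneousComponent w 0 b) by ring, map_add, hlow, hhigh, add_zero]

theorem aeval_ite_X_eq_weightedHomogeneousComponent_zero (w : σ → ℕ) (p : MvPolynomial σ R) :
    aeval (fun i => if w i = 0 then X i else 0) p = weightedHomogeneousComponent w 0 p := by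
  induction p using MvPolynomial.induction_on with
  | C r => rw [aeval_C, weightedHomogeneousComponent_eq_self (isWeightedHomogeneous_C w r)]; rfl
  | add p q hp hq => rw [map_add, map_add, hp, hq]
  | mul_X p i hp =>
    rw [map_mul, hp, aeval_X,
      weightedHomogeneousComponent_mul_of_le_weight (fun _ _ => Nat.zero_le _)]
    split_ifs with hi
    · rw [weightedHomogeneousComponent_eq_self (p := X i) (hi ▸ isWeightedHomogeneous_X R w i)]
    · rw [weightedHomogeneousComponent_eq_zero' 0 (X i) fun _ hd =>
        (isWeightedHomogeneous_X R w i (mem_support_iff.mp hd)).trans_ne hi, mul_zero]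

theorem exists_weightedHomogeneousComponent_mul_eq {w : σ → ℕ} {e : ℕ} {β : MvPolynomial σ R}
    (hβ : β.IsWeightedHomogeneous w e) (c : MvPolynomial σ R) (a : ℕ) :
    ∃ c' : MvPolynomial σ R, c'.support ⊆ c.support ∧ (∀ d ∈ c'.support, weight w d + e = a) ∧
      weightedHomogeneousComponent w a (c * β) = c' * β := by
  by_cases hea : e ≤ a
  · refine ⟨weightedHomogeneousComponent w (a - e) c, ?_, fun d hd => ?_, ?_⟩
    · rw [support_weightedHomogeneousComponent]
      exact Finset.filter_subset _ _
    · rw [support_weightedHomogeneousComponent, Finset.mem_filter] at hd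
      omega
    · rw [← weightedHomogeneousComponent_add_mul hβ, Nat.sub_add_cancel hea]
  · refine ⟨0, by simp, by simp, ?_⟩
    rw [zero_mul]
    refine weightedHomogeneousComponent_eq_zero' _ _ fun d hd => ?_
    obtain ⟨d₁, -, d₂, h₂, hw⟩ := exists_weight_eq_add_of_mem_support_mul w hd
    have := hβ (mem_support_iff.mp h₂)
    omega

theorem mem_supported_of_support_subset {s : Set σ} {p q : MvPolynomial σ R}
    (hqp : q.support ⊆ p.support) (hp : p ∈ supported R s) : q ∈ supported R s := by
  rw [mem_supported] at hp ⊢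
  intro i hi
  obtain ⟨d, hd, hid⟩ := (mem_vars_iff_mem_support i).1 hi
  exact hp ((mem_vars_iff_mem_support i).2 ⟨d, hqp hd, hid⟩)

theorem weightedHomogeneousComponent_mem_supported {M : Type*} [AddCommMonoid M] {w : σ → M}
    {s : Set σ} {p : MvPolynomial σ R} (hp : p ∈ supported R s) (a : M) :
    weightedHomogeneousComponent w a p ∈ supported R s := by
  classical
  refine mem_supported_of_support_subset ?_ hp
  rw [support_weightedHomogeneousComponent]
  exact Finset.filter_subset _ _

section StanleyMap

variable {ι : Type*} [Fintype ι] (s : ι → Set σ) (b : ι → MvPolynomial σ R)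

/-- The family `b` is a basis of `R[σ]` over the subrings `R[s j]` (a Stanley decomposition) iff
this map is bijective. -/
noncomputable def stanleyMap : ((j : ι) → supported R (s j)) →ₗ[R] MvPolynomial σ R :=
  ∑ j, LinearMap.mulRight R (b j) ∘ₗ (supported R (s j)).val.toLinearMap ∘ₗ LinearMap.proj j

theorem stanleyMap_apply (c : (j : ι) → supported R (s j)) :
    stanleyMap s b c = ∑ j, (c j : MvPolynomial σ R) * b j := by
  simp [stanleyMap]

theorem mem_range_stanleyMap {p : MvPolynomial σ R} :
    p ∈ LinearMap.range (stanleyMap s b) ↔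
      ∃ c : ι → MvPolynomial σ R, (∀ j, c j ∈ supported R (s j)) ∧ p = ∑ j, c j * b j := by
  constructor
  · rintro ⟨c, rfl⟩
    exact ⟨fun j => c j, fun j => (c j).2, stanleyMap_apply s b c⟩
  · rintro ⟨c, hc, rfl⟩
    exact ⟨fun j => ⟨c j, hc j⟩, stanleyMap_apply s b _⟩

theorem surjective_stanleyMap_iff :
    Surjective (stanleyMap s b) ↔ ∀ p : MvPolynomial σ R,
      ∃ c : ι → MvPolynomial σ R, (∀ j, c j ∈ supported R (s j)) ∧ p = ∑ j, c j * b j := by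
  simp only [← LinearMap.range_eq_top, Submodule.eq_top_iff', mem_range_stanleyMap]

theorem injective_stanleyMap_iff :
    Injective (stanleyMap s b) ↔ ∀ c : ι → MvPolynomial σ R, (∀ j, c j ∈ supported R (s j)) →
      ∑ j, c j * b j = 0 → ∀ j, c j = 0 := by
  rw [injective_iff_map_eq_zero]
  constructor
  · intro h c hc hsum j
    have := h (fun j => ⟨c j, hc j⟩) (by rwa [stanleyMap_apply])
    exact congrArg Subtype.val (congrFun this j)
  · intro h c hsum
    funext j
    exact Subtype.ext (h (fun j => c j) (fun j => (c j).2) (by rwa [stanleyMap_apply] at hsum) j)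

theorem injective_stanleyMap_of_lowest (w : σ → ℕ)
    (h : Injective (stanleyMap s fun j => weightedHomogeneousComponent w 0 (b j))) :
    Injective (stanleyMap s b) := by
  rw [injective_stanleyMap_iff] at h ⊢
  intro c hc hsum
  have hord : ∀ t, ∀ j, ∀ d ∈ (c j).support, t ≤ weight w d := by
    intro t
    induction t with
    | zero => exact fun _ _ _ => Nat.zero_le _
    | succ t ih =>
      have hlow : ∀ j, weightedHomogeneousComponent w t (c j) = 0 := by
        refine h _ (fun j => weightedHomogeneousComponent_mem_supported (hc j) t) ?_
        simpa only [map_sum, weightedHomogeneousComponent_mul_of_le_weight (ih _), map_zero]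
          using congrArg (weightedHomogeneousComponent w t) hsum
      intro j d hd
      rw [← sub_zero (c j), ← hlow j, support_sub_weightedHomogeneousComponent,
        Finset.mem_filter] at hd
      have := ih j d hd.1
      omega
  intro j
  ext d
  by_contra hd
  have := hord (weight w d + 1) j d (mem_support_iff.2 hd)
  omega

theorem weightedHomogeneousSubmodule_le_range_stanleyMap (w : σ → ℕ) (e : ι → ℕ)
    (hb : ∀ j, ∀ d ∈ (b j).support, weight w d ≤ e j)
    (h : Surjective (stanleyMap s fun j => weightedHomogeneousComponent w (e j) (b j))) {a : ℕ}
    (hlt : restrictSupport R {d | weight w d < a} ≤ LinearMap.range (stanleyMap s b)) :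
    weightedHomogeneousSubmodule R w a ≤ LinearMap.range (stanleyMap s b) := by
  intro q hq
  rw [mem_weightedHomogeneousSubmodule] at hq
  obtain ⟨c, hc, rfl⟩ := (surjective_stanleyMap_iff s _).1 h q
  choose c' hc'c hc'a hc' using fun j => exists_weightedHomogeneousComponent_mul_eq
    (weightedHomogeneousComponent_isWeightedHomogeneous (w := w) (e j) (b j)) (c j) a
  rw [← weightedHomogeneousComponent_eq_self hq, map_sum, Finset.sum_congr rfl fun j _ => hc' j,
    ← sub_add_cancel (∑ j, _) (∑ j, c' j * b j), ← Finset.sum_sub_distrib]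
  refine add_mem (Submodule.sum_mem _ fun j _ => hlt ?_) ((mem_range_stanleyMap s b).2
    ⟨c', fun j => mem_supported_of_support_subset (hc'c j) (hc j), rfl⟩)
  intro d hd
  rw [← mul_sub, Finset.mem_coe] at hd
  obtain ⟨d₁, h₁, d₂, h₂, hw⟩ := exists_weight_eq_add_of_mem_support_mul w hd
  rw [← neg_sub, support_neg, support_sub_weightedHomogeneousComponent, Finset.mem_filter] at h₂
  have := hc'a j d₁ h₁
  have := hb j d₂ h₂.1
  change weight w d < a
  omega

theorem surjective_stanleyMap_of_highest (w : σ → ℕ) (e : ι → ℕ)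
    (hb : ∀ j, ∀ d ∈ (b j).support, weight w d ≤ e j)
    (h : Surjective (stanleyMap s fun j => weightedHomogeneousComponent w (e j) (b j))) :
    Surjective (stanleyMap s b) := by
  have hlt : ∀ a, restrictSupport R {d | weight w d < a} ≤ LinearMap.range (stanleyMap s b) := by
    intro a
    induction a with
    | zero =>
      intro p hp
      simp_all [mem_restrictSupport_iff]
    | succ a ih =>
      intro p hp
      rw [← add_sub_cancel (weightedHomogeneousComponent w a p) p]
      refine add_mem (weightedHomogeneousSubmodule_le_range_stanleyMap s b w e hb h ih
        (weightedHomogeneousComponent_mem w p a)) (ih ?_)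
      rw [mem_restrictSupport_iff] at hp ⊢
      intro d hd
      rw [Finset.mem_coe, support_sub_weightedHomogeneousComponent, Finset.mem_filter] at hd
      have : weight w d < a + 1 := hp hd.1
      exact lt_of_le_of_ne (Nat.lt_succ_iff.1 this) hd.2
  rw [← LinearMap.range_eq_top, eq_top_iff]
  exact fun p _ => hlt (weightedTotalDegree w p + 1) fun d hd =>
    Nat.lt_succ_of_le (le_weightedTotalDegree w hd)

end StanleyMap

end MvPolynomial

section StanleyBasis

variable {K : Type*} [CommRing K] {n m : ℕ}

theorem inLastXY_iff_mem_supported (i : ℕ) (p : MvPolynomial (Fin (n + m)) K) :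
    InLastXY i p ↔ p ∈ supported K {j : Fin (n + m) | n - i ≤ (j : ℕ)} := by
  rw [mem_supported, Set.subset_def]
  simp only [InLastXY, Finset.mem_coe, mem_vars_iff_mem_support, Finsupp.mem_support_iff,
    Set.mem_ofPred_eq]
  constructor
  · rintro h j ⟨d, hd, hdj⟩
    by_contra hj
    exact hdj (h d hd j (by omega))
  · intro h d hd j hj
    by_contra hdj
    exact absurd (h j ⟨d, hd, hdj⟩) (by omega)

variable (n m) in
def xWeight : Fin (n + m) → ℕ := fun j => if (j : ℕ) < n then 1 else 0

variable (n m) in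
def yWeight : Fin (n + m) → ℕ := fun j => if (j : ℕ) < n then 0 else 1

theorem weight_xWeight_add_weight_yWeight (d : Fin (n + m) →₀ ℕ) :
    weight (xWeight n m) d + weight (yWeight n m) d = d.degree := by
  simp only [weight_apply, Finsupp.sum, Finsupp.degree, ← Finset.sum_add_distrib]
  refine Finset.sum_congr rfl fun j _ => ?_
  simp only [xWeight, yWeight, smul_eq_mul]
  split_ifs <;> simp

theorem evalY0_eq_weightedHomogeneousComponent (p : MvPolynomial (Fin (n + m)) K) :
    evalY0 K n m p = weightedHomogeneousComponent (yWeight n m) 0 p := by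
  rw [← aeval_ite_X_eq_weightedHomogeneousComponent_zero, evalY0]
  congr 2 with j
  simp [yWeight]

theorem weight_xWeight_le_of_isHomogeneous {e : ℕ} {p : MvPolynomial (Fin (n + m)) K}
    (hp : p.IsHomogeneous e) : ∀ d ∈ p.support, weight (xWeight n m) d ≤ e := fun d hd => by
  have := weight_xWeight_add_weight_yWeight d
  have : d.degree = e := by rw [degree_eq_weight_one]; exact hp (mem_support_iff.1 hd)
  omega

theorem evalY0_eq_weightedHomogeneousComponent_of_isHomogeneous {e : ℕ}
    {p : MvPolynomial (Fin (n + m)) K} (hp : p.IsHomogeneous e) :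
    evalY0 K n m p = weightedHomogeneousComponent (xWeight n m) e p := by
  ext d
  rw [evalY0_eq_weightedHomogeneousComponent, coeff_weightedHomogeneousComponent,
    coeff_weightedHomogeneousComponent]
  by_cases hd : coeff d p = 0
  · simp [hd]
  · have hdeg : d.degree = e := by rw [degree_eq_weight_one]; exact hp hd
    have := weight_xWeight_add_weight_yWeight d
    by_cases hy : weight (yWeight n m) d = 0
    · rw [if_pos hy, if_pos (by omega)]
    · rw [if_neg hy, if_neg (by omega)]

end StanleyBasis

theorem stanley_basis_lift_general {K : Type*} [CommRing K] {n m N : ℕ}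
    (lvl : Fin N → ℕ)
    (deg : Fin N → ℕ)
    (b : Fin N → MvPolynomial (Fin (n + m)) K)
    (hhom : ∀ j, (b j).IsHomogeneous (deg j))
    -- `{b_j(x,0)}` is a basis of `R_{n+m}` over `(R_{i+m})_{i=0}^n`:
    (hgen0 : ∀ p : MvPolynomial (Fin (n + m)) K,
      ∃ c : Fin N → MvPolynomial (Fin (n + m)) K,
        (∀ j, InLastXY (K := K) (n := n) (m := m) (lvl j) (c j)) ∧
        p = ∑ j, c j * evalY0 K n m (b j))
    (hind0 : ∀ c : Fin N → MvPolynomial (Fin (n + m)) K,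
      (∀ j, InLastXY (K := K) (n := n) (m := m) (lvl j) (c j)) →
      ∑ j, c j * evalY0 K n m (b j) = 0 → ∀ j, c j = 0) :
    (∀ p : MvPolynomial (Fin (n + m)) K,
      ∃ c : Fin N → MvPolynomial (Fin (n + m)) K,
        (∀ j, InLastXY (K := K) (n := n) (m := m) (lvl j) (c j)) ∧
        p = ∑ j, c j * b j) ∧
    (∀ c : Fin N → MvPolynomial (Fin (n + m)) K,
      (∀ j, InLastXY (K := K) (n := n) (m := m) (lvl j) (c j)) →
      ∑ j, c j * b j = 0 → ∀ j, c j = 0) := by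
  let s : Fin N → Set (Fin (n + m)) := fun j => {i | n - lvl j ≤ (i : ℕ)}
  simp only [inLastXY_iff_mem_supported] at hgen0 hind0 ⊢
  have hhighest (j : Fin N) :
      evalY0 K n m (b j) = weightedHomogeneousComponent (xWeight n m) (deg j) (b j) :=
    evalY0_eq_weightedHomogeneousComponent_of_isHomogeneous (hhom j)
  have hsurj := surjective_stanleyMap_of_highest s b (xWeight n m) deg
    (fun j => weight_xWeight_le_of_isHomogeneous (hhom j))
    ((surjective_stanleyMap_iff s _).2 (by simpa only [hhighest] using hgen0))
  have hinj := injective_stanleyMap_of_lowest s b (yWeight n m)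
    ((injective_stanleyMap_iff s _).2
      (by simpa only [evalY0_eq_weightedHomogeneousComponent] using hind0))
  exact ⟨(surjective_stanleyMap_iff s b).1 hsurj, (injective_stanleyMap_iff s b).1 hinj⟩

/-- **Lifting a Stanley basis to extra variables.**  Let
`R_{n+m} = K[x_1,…,x_n,y_1,…,y_m]` with its standard grading, and let `b_j` be
homogeneous of degree `deg j` with `deg(b_j) = deg(b_j(x,0))` (i.e.
`b_j(x,0) ≠ 0`).  If the specializations `b_j(x,0)` form a basis of `R_{n+m}`
over `(R_{i+m})_{i=0}^n`, then the `b_j` themselves form a basis of `R_{n+m}`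
over `(R_{i+m})_{i=0}^n`. -/
theorem stanley_basis_lift {K : Type*} [CommRing K] {n m N : ℕ}
    (lvl : Fin N → ℕ) (hlvl : ∀ j, lvl j ≤ n)
    (deg : Fin N → ℕ)
    (b : Fin N → MvPolynomial (Fin (n + m)) K)
    (hhom : ∀ j, (b j).IsHomogeneous (deg j))
    (hev : ∀ j, evalY0 K n m (b j) ≠ 0)
    -- `{b_j(x,0)}` is a basis of `R_{n+m}` over `(R_{i+m})_{i=0}^n`:
    (hgen0 : ∀ p : MvPolynomial (Fin (n + m)) K,
      ∃ c : Fin N → MvPolynomial (Fin (n + m)) K,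
        (∀ j, InLastXY (K := K) (n := n) (m := m) (lvl j) (c j)) ∧
        p = ∑ j, c j * evalY0 K n m (b j))
    (hind0 : ∀ c : Fin N → MvPolynomial (Fin (n + m)) K,
      (∀ j, InLastXY (K := K) (n := n) (m := m) (lvl j) (c j)) →
      ∑ j, c j * evalY0 K n m (b j) = 0 → ∀ j, c j = 0) :
    (∀ p : MvPolynomial (Fin (n + m)) K,
      ∃ c : Fin N → MvPolynomial (Fin (n + m)) K,
        (∀ j, InLastXY (K := K) (n := n) (m := m) (lvl j) (c j)) ∧
        p = ∑ j, c j * b j) ∧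
    (∀ c : Fin N → MvPolynomial (Fin (n + m)) K,
      (∀ j, InLastXY (K := K) (n := n) (m := m) (lvl j) (c j)) →
      ∑ j, c j * b j = 0 → ∀ j, c j = 0) :=
  stanley_basis_lift_general lvl deg b hhom hgen0 hind0
end
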